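/- arXiv:1904.05144 — 14 statements merged into one kernel-verified Lean document; each statement's English description precedes it below -/
import Mathlib

section
/- Let T be a meet-tree and A ⊆ T a subset. Then the substructure of T generated by A under the meet operation is exactly the set of meets a ∧ b of pairs of elements a, b ∈ A. In other words, the set {a ∧ b : a, b ∈ A} is closed under the meet operation. -/
private lemma triple_meet {T : Type*} [SemilatticeInf T]
    (hsl : ∀ a b c : T, b ≤ a → c ≤ a → b ≤ c ∨ c ≤ b)
    (a b c : T) : a ⊓ b ⊓ c = a ⊓ b ∨ a ⊓ b ⊓ c = a ⊓ c := by
  rcases hsl a (a ⊓ b) (a ⊓ c) inf_le_left inf_le_left with h | h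
  · left
    exact le_antisymm inf_le_left (le_inf le_rfl (h.trans inf_le_right))
  · right
    have hb : a ⊓ c ≤ b := h.trans inf_le_right
    exact le_antisymm (le_inf (inf_le_left.trans inf_le_left) inf_le_right)
      (le_inf (le_inf inf_le_left hb) inf_le_right)

/-- In a meet-tree, the substructure generated by a subset `A` is exactly the set of
meets of pairs of elements of `A`: this set contains `A` and is closed under `⊓`. -/
theorem meetTree_generated_by_pairs {T : Type*} [SemilatticeInf T]
    (hsl : ∀ a b c : T, b ≤ a → c ≤ a → b ≤ c ∨ c ≤ b)
    (A : Set T) :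
    A ⊆ {x : T | ∃ a ∈ A, ∃ b ∈ A, x = a ⊓ b} ∧
    ∀ x ∈ {x : T | ∃ a ∈ A, ∃ b ∈ A, x = a ⊓ b},
      ∀ y ∈ {x : T | ∃ a ∈ A, ∃ b ∈ A, x = a ⊓ b},
        x ⊓ y ∈ {x : T | ∃ a ∈ A, ∃ b ∈ A, x = a ⊓ b} := by
  constructor
  · intro a ha
    exact ⟨a, ha, a, ha, (inf_idem a).symm⟩
  · rintro x ⟨a, ha, b, hb, rfl⟩ y ⟨c, hc, d, hd, rfl⟩
    have key : (a ⊓ b) ⊓ (c ⊓ d) = ((a ⊓ b) ⊓ c) ⊓ d := by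
      rw [← inf_assoc]
    rcases triple_meet hsl a b c with h1 | h1
    · rw [h1] at key
      rcases triple_meet hsl a b d with h2 | h2
      · exact ⟨a, ha, b, hb, key.trans h2⟩
      · exact ⟨a, ha, d, hd, key.trans h2⟩
    · rw [h1] at key
      rcases triple_meet hsl a c d with h2 | h2
      · exact ⟨a, ha, c, hc, key.trans h2⟩
      · exact ⟨a, ha, d, hd, key.trans h2⟩
end

section
/- Let P be a tree (a semilinear partial order in which every pair of elements has a common lower bound). Then the set P̂ of nonempty cuts in P, ordered by inclusion, is a meet-tree, with the meet of two cuts given by their intersection. -/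
/-- A (lower) cut in a poset: a downwards closed, upwards directed subset. -/
def IsCut {P : Type*} [PartialOrder P] (C : Set P) : Prop :=
  (∀ ⦃a c : P⦄, c ∈ C → a ≤ c → a ∈ C) ∧
  ∀ c₁ ∈ C, ∀ c₂ ∈ C, ∃ c ∈ C, c₁ ≤ c ∧ c₂ ≤ c

/-- If `P` is a tree (semilinear partial order in which every pair of elements has a
common lower bound), then the nonempty cuts of `P`, ordered by inclusion, form a
meet-tree with meets given by intersection: the intersection of two nonempty cuts is a
nonempty cut and is their greatest lower bound, and the order on nonempty cuts is
semilinear. -/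
theorem nonempty_cuts_meetTree {P : Type*} [PartialOrder P]
    (hsl : ∀ a b c : P, b ≤ a → c ≤ a → b ≤ c ∨ c ≤ b)
    (hlb : ∀ a b : P, ∃ c : P, c ≤ a ∧ c ≤ b) :
    (∀ C₁ C₂ : Set P, IsCut C₁ → C₁.Nonempty → IsCut C₂ → C₂.Nonempty →
      IsCut (C₁ ∩ C₂) ∧ (C₁ ∩ C₂).Nonempty) ∧
    (∀ C C₁ C₂ : Set P, IsCut C → IsCut C₁ → IsCut C₂ →
      C ⊆ C₁ → C ⊆ C₂ → C ⊆ C₁ ∩ C₂) ∧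
    (∀ C C₁ C₂ : Set P, IsCut C → C.Nonempty → IsCut C₁ → C₁.Nonempty →
      IsCut C₂ → C₂.Nonempty → C₁ ⊆ C → C₂ ⊆ C → C₁ ⊆ C₂ ∨ C₂ ⊆ C₁) := by
  -- Key observation: any cut is a chain.
  have chain : ∀ C : Set P, IsCut C → ∀ x ∈ C, ∀ y ∈ C, x ≤ y ∨ y ≤ x := by
    intro C hC x hx y hy
    obtain ⟨c, _, hxc, hyc⟩ := hC.2 x hx y hy
    exact hsl c x y hxc hyc
  refine ⟨?_, ?_, ?_⟩
  · intro C₁ C₂ h₁ ⟨a, ha⟩ h₂ ⟨b, hb⟩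
    constructor
    · constructor
      · intro x c hc hxc
        exact ⟨h₁.1 hc.1 hxc, h₂.1 hc.2 hxc⟩
      · intro x hx y hy
        rcases chain C₁ h₁ x hx.1 y hy.1 with h | h
        · exact ⟨y, hy, h, le_refl y⟩
        · exact ⟨x, hx, le_refl x, h⟩
    · obtain ⟨c, hca, hcb⟩ := hlb a b
      exact ⟨c, h₁.1 ha hca, h₂.1 hb hcb⟩
  · intro C C₁ C₂ _ _ _ hs₁ hs₂ x hx
    exact ⟨hs₁ hx, hs₂ hx⟩
  · intro C C₁ C₂ hC _ h₁ _ h₂ _ hs₁ hs₂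
    by_cases h : C₁ ⊆ C₂
    · exact Or.inl h
    · right
      obtain ⟨x, hx, hxn⟩ := Set.not_subset.mp h
      intro y hy
      rcases chain C hC x (hs₁ hx) y (hs₂ hy) with hxy | hyx
      · exact absurd (h₂.1 hy hxy) hxn
      · exact h₁.1 hx hyx
end

section
/- Let T be a meet-tree, a₁, a₂ ∈ T, and B ⊆ T a finite subset. If a₁ ∧ a₂ > max_{b∈B} (b ∧ a₁), then for every b ∈ B: b ∧ a₁ = b ∧ a₂; b ≤ a₁ if and only if b ≤ a₂; b < a₁ if and only if b < a₂; and neither a₁ < b nor a₂ < b holds. -/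
/-- Let `T` be a meet-tree, `a₁ a₂ ∈ T` and `B ⊆ T` finite nonempty.  If
`a₁ ⊓ a₂ > max_{b ∈ B} (b ⊓ a₁)` (i.e. `b ⊓ a₁ < a₁ ⊓ a₂` for all `b ∈ B`), then for
every `b ∈ B`: `b ⊓ a₁ = b ⊓ a₂`, `b ≤ a₁ ↔ b ≤ a₂`, `b < a₁ ↔ b < a₂`, and neither
`a₁ < b` nor `a₂ < b` holds. -/
theorem meetTree_same_relations_of_high_meet {T : Type*} [SemilatticeInf T]
    (hsl : ∀ a b c : T, b ≤ a → c ≤ a → b ≤ c ∨ c ≤ b)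
    (a₁ a₂ : T) (B : Set T) (hfin : B.Finite) (hne : B.Nonempty)
    (h : ∀ b ∈ B, b ⊓ a₁ < a₁ ⊓ a₂) :
    ∀ b ∈ B, b ⊓ a₁ = b ⊓ a₂ ∧ (b ≤ a₁ ↔ b ≤ a₂) ∧ (b < a₁ ↔ b < a₂) ∧
      ¬ a₁ < b ∧ ¬ a₂ < b := by
  intro b hb
  have hlt := h b hb
  have h1 : b ⊓ a₁ ≤ b ⊓ a₂ :=
    le_inf inf_le_left (hlt.le.trans inf_le_right)
  have h2 : b ⊓ a₂ ≤ b ⊓ a₁ := by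
    rcases hsl a₂ (b ⊓ a₂) (a₁ ⊓ a₂) inf_le_right inf_le_right with hc | hc
    · exact le_inf inf_le_left (hc.trans inf_le_left)
    · exact absurd (le_inf (hc.trans inf_le_left) inf_le_left) (not_le_of_gt hlt)
  have heq : b ⊓ a₁ = b ⊓ a₂ := le_antisymm h1 h2
  have hiff : b ≤ a₁ ↔ b ≤ a₂ := by
    constructor
    · intro hba
      have : b ⊓ a₁ = b := inf_eq_left.mpr hba
      calc b = b ⊓ a₂ := by rw [← heq, this]
        _ ≤ a₂ := inf_le_right
    · intro hba
      have : b ⊓ a₂ = b := inf_eq_left.mpr hba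
      calc b = b ⊓ a₁ := by rw [heq, this]
        _ ≤ a₁ := inf_le_right
  have hne1 : b ≠ a₁ := by
    rintro rfl; simp only [inf_idem] at hlt
    exact absurd inf_le_left hlt.not_ge
  have hne2 : b ≠ a₂ := by
    rintro rfl
    exact absurd hlt (by simp [inf_comm])
  refine ⟨heq, hiff, ⟨fun h' => lt_of_le_of_ne (hiff.mp h'.le) hne2,
    fun h' => lt_of_le_of_ne (hiff.mpr h'.le) hne1⟩, ?_, ?_⟩
  · intro h'
    have : b ⊓ a₁ = a₁ := inf_eq_right.mpr h'.le
    exact absurd (hlt.trans_le inf_le_left) (by rw [this]; exact lt_irrefl _)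
  · intro h'
    have : b ⊓ a₂ = a₂ := inf_eq_right.mpr h'.le
    exact absurd ((heq ▸ hlt).trans_le inf_le_right) (by rw [this]; exact lt_irrefl _)
end

section
/- Let M be a first-order structure and p a finite partial automorphism of M. If p is positively determined, then p is determined. That is, if up to isomorphism over p there is a unique positively strict extension of p, then up to isomorphism over p there is a unique strict extension of p. -/
open FirstOrder FirstOrder.Language

/-- A partial map `e` (given as a `PartialEquiv`) preserves quantifier-free types:
for every quantifier-free formula and every tuple from its source, the formula holds of
the tuple iff it holds of its image. -/
def QFPreserving (L : FirstOrder.Language) (M : Type*) [L.Structure M]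
    (e : PartialEquiv M M) : Prop :=
  ∀ (n : ℕ) (φ : L.Formula (Fin n)), φ.IsQF →
    ∀ x : Fin n → M, (∀ i, x i ∈ e.source) →
      (φ.Realize x ↔ φ.Realize (fun i => e (x i)))

/-- `f` extends `p` as a partial map. -/
def PExtends {M : Type*} (f p : PartialEquiv M M) : Prop :=
  p.source ⊆ f.source ∧ ∀ x ∈ p.source, f x = p x

/-- The union of the full `f`-orbits (forwards and backwards) of the elements of `A`. -/
def orbitSet {M : Type*} (f : PartialEquiv M M) (A : Set M) : Set M :=
  {y | ∃ x ∈ A, ∃ n : ℕ, y = (f : M → M)^[n] x ∨ y = (f.symm : M → M)^[n] x}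

/-- The union of the positive `f`-orbits of the elements of `A`. -/
def posOrbitSet {M : Type*} (f : PartialEquiv M M) (A : Set M) : Set M :=
  {y | ∃ x ∈ A, ∃ n : ℕ, y = (f : M → M)^[n] x}

/-- `f` is a strict extension of `p`: a partial automorphism extending `p` with
`dom f = range f` a substructure generated by the `f`-orbits of elements of `dom p`. -/
def IsStrictExt (L : FirstOrder.Language) (M : Type*) [L.Structure M]
    (p f : PartialEquiv M M) : Prop :=
  PExtends f p ∧ QFPreserving L M f ∧ f.source = f.target ∧
    f.source = ↑(Substructure.closure L (M := M) (orbitSet f p.source))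

/-- `f` is a positively strict extension of `p`: a partial automorphism extending `p`,
an endomorphism of its domain (`range f ⊆ dom f`), whose domain is the substructure
generated by the positive `f`-orbits of elements of `dom p`. -/
def IsPosStrictExt (L : FirstOrder.Language) (M : Type*) [L.Structure M]
    (p f : PartialEquiv M M) : Prop :=
  PExtends f p ∧ QFPreserving L M f ∧ f.target ⊆ f.source ∧
    f.source = ↑(Substructure.closure L (M := M) (posOrbitSet f p.source))

/-- Two extensions `f, g` of `p` are isomorphic over `p`: there is an isomorphism
`θ : dom f → dom g` fixing `dom p` pointwise with `θ ∘ f = g ∘ θ`. -/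
def IsoOver (L : FirstOrder.Language) (M : Type*) [L.Structure M]
    (p f g : PartialEquiv M M) : Prop :=
  ∃ θ : PartialEquiv M M, θ.source = f.source ∧ θ.target = g.source ∧
    QFPreserving L M θ ∧ (∀ x ∈ p.source, θ x = x) ∧
    ∀ x ∈ f.source, θ (f x) = g (θ x)

section PDAux

open Set Function

variable {L : FirstOrder.Language} {M : Type*} [L.Structure M]

lemma PD_mapsTo {e : PartialEquiv M M} (hst : e.source = e.target) :
    Set.MapsTo e e.source e.source := fun _ hx => hst ▸ e.map_source hx

lemma PD_symm_mapsTo {e : PartialEquiv M M} (hst : e.source = e.target) :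
    Set.MapsTo e.symm e.source e.source := fun _ hx => e.map_target (hst ▸ hx)

lemma PD_iter_mem {e : PartialEquiv M M} (hst : e.source = e.target) (n : ℕ)
    {x : M} (hx : x ∈ e.source) : (⇑e)^[n] x ∈ e.source :=
  (PD_mapsTo hst).iterate n hx

lemma PD_symm_iter_mem {e : PartialEquiv M M} (hst : e.source = e.target) (n : ℕ)
    {x : M} (hx : x ∈ e.source) : (⇑e.symm)^[n] x ∈ e.source :=
  (PD_symm_mapsTo hst).iterate n hx

lemma PD_cancel {e : PartialEquiv M M} (hst : e.source = e.target) :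
    ∀ (n : ℕ) {x : M}, x ∈ e.source → (⇑e.symm)^[n] ((⇑e)^[n] x) = x
  | 0, _, _ => rfl
  | n+1, x, hx => by
    rw [Function.iterate_succ_apply (⇑e), Function.iterate_succ_apply' (⇑e.symm),
      PD_cancel hst n (PD_mapsTo hst hx)]
    exact e.left_inv hx

lemma PD_cancel' {e : PartialEquiv M M} (hst : e.source = e.target) :
    ∀ (n : ℕ) {x : M}, x ∈ e.source → (⇑e)^[n] ((⇑e.symm)^[n] x) = x
  | 0, _, _ => rfl
  | n+1, x, hx => by
    rw [Function.iterate_succ_apply (⇑e.symm), Function.iterate_succ_apply' (⇑e),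
      PD_cancel' hst n (PD_symm_mapsTo hst hx)]
    exact e.right_inv (hst ▸ hx)

lemma PD_comm {e : PartialEquiv M M} (hst : e.source = e.target) :
    ∀ (n : ℕ) {x : M}, x ∈ e.source → (⇑e.symm)^[n] (e x) = e ((⇑e.symm)^[n] x)
  | 0, _, _ => rfl
  | n+1, x, hx => by
    rw [Function.iterate_succ_apply (⇑e.symm), Function.iterate_succ_apply' (⇑e.symm),
      e.left_inv hx]
    exact (e.right_inv (hst ▸ PD_symm_iter_mem hst n hx)).symm

lemma PD_qf_symm {e : PartialEquiv M M} (hq : QFPreserving L M e) :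
    QFPreserving L M e.symm := by
  intro k φ hφ y hy
  have hy' : ∀ i, e.symm (y i) ∈ e.source := fun i => e.map_target (hy i)
  have h := hq k φ hφ (fun i => e.symm (y i)) hy'
  have hyy : (fun i => e (e.symm (y i))) = y := funext fun i => e.right_inv (hy i)
  rw [hyy] at h
  exact h.symm

lemma PD_qf_iter {e : PartialEquiv M M} (hq : QFPreserving L M e)
    (hst : e.source = e.target) :
    ∀ (n : ℕ) {k : ℕ} (φ : L.Formula (Fin k)), φ.IsQF →
      ∀ x : Fin k → M, (∀ i, x i ∈ e.source) →
        (φ.Realize x ↔ φ.Realize fun i => (⇑e)^[n] (x i)) := by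
  intro n
  induction n with
  | zero => intro k φ _ x _; simp
  | succ n ih =>
    intro k φ hφ x hx
    have h1 := ih φ hφ x hx
    have h2 := hq k φ hφ (fun i => (⇑e)^[n] (x i)) (fun i => PD_iter_mem hst n (hx i))
    simp only [← Function.iterate_succ_apply'] at h2
    exact h1.trans h2

lemma PD_qf_funMap {e : PartialEquiv M M} (hq : QFPreserving L M e)
    (hcl : ∀ {k : ℕ} (F : L.Functions k) (a : Fin k → M),
      (∀ i, a i ∈ e.source) → Structure.funMap F a ∈ e.source)
    {k : ℕ} (F : L.Functions k) (a : Fin k → M) (ha : ∀ i, a i ∈ e.source) :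
    e (Structure.funMap F a) = Structure.funMap F fun i => e (a i) := by
  set φ : L.Formula (Fin (k+1)) :=
    Term.equal (Term.func F fun i => Term.var (Fin.castSucc i)) (Term.var (Fin.last k)) with hφdef
  have hφ : φ.IsQF := (BoundedFormula.IsAtomic.equal _ _).isQF
  have hreal : ∀ v : Fin (k+1) → M,
      φ.Realize v ↔ Structure.funMap F (fun i => v (Fin.castSucc i)) = v (Fin.last k) := by
    intro v; simp [hφdef, Term.realize]
  set v : Fin (k+1) → M := Fin.snoc a (Structure.funMap F a) with hvdef
  have hv : ∀ i, v i ∈ e.source := by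
    intro i
    refine Fin.lastCases ?_ ?_ i
    · simpa [hvdef] using hcl F a ha
    · intro j; simpa [hvdef] using ha j
  have h := hq (k+1) φ hφ v hv
  rw [hreal, hreal] at h
  have h0 : Structure.funMap F (fun i => v (Fin.castSucc i)) = v (Fin.last k) := by
    simp [hvdef]
  rw [h0] at h
  have h1 := h.1 rfl
  simpa [hvdef] using h1.symm

lemma PD_iter_funMap {e : PartialEquiv M M} (hq : QFPreserving L M e)
    (hst : e.source = e.target)
    (hcl : ∀ {k : ℕ} (F : L.Functions k) (a : Fin k → M),
      (∀ i, a i ∈ e.source) → Structure.funMap F a ∈ e.source)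
    (m : ℕ) {k : ℕ} (F : L.Functions k) (a : Fin k → M) (ha : ∀ i, a i ∈ e.source) :
    (⇑e)^[m] (Structure.funMap F a) = Structure.funMap F fun i => (⇑e)^[m] (a i) := by
  induction m with
  | zero => rfl
  | succ m ih =>
    rw [Function.iterate_succ_apply' (⇑e), ih,
      PD_qf_funMap hq hcl F _ (fun i => PD_iter_mem hst m (ha i))]
    simp only [← Function.iterate_succ_apply' (⇑e)]

end PDAux

section PDStrict

open Set Function FirstOrder.Language

variable {L : FirstOrder.Language} {M : Type*} [L.Structure M]
variable {p f : PartialEquiv M M}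

lemma PD_src_closed (hf : IsStrictExt L M p f) :
    ∀ {k : ℕ} (F : L.Functions k) (a : Fin k → M),
      (∀ i, a i ∈ f.source) → Structure.funMap F a ∈ f.source := by
  intro k F a ha
  rw [hf.2.2.2] at ha ⊢
  exact (Substructure.closure L (orbitSet f p.source)).fun_mem F a ha

lemma PD_pos_sub_src (hf : IsStrictExt L M p f) :
    posOrbitSet f p.source ⊆ f.source := by
  rintro y ⟨x, hx, n, rfl⟩
  exact PD_iter_mem hf.2.2.1 n (hf.1.1 hx)

lemma PD_N_sub (hf : IsStrictExt L M p f) :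
    (↑(Substructure.closure L (M := M) (posOrbitSet f p.source)) : Set M) ⊆ f.source := by
  rw [hf.2.2.2]
  exact SetLike.coe_subset_coe.2 (Substructure.closure_le.2 (by
    rw [← hf.2.2.2]; exact PD_pos_sub_src hf))

lemma PD_mapsN (hf : IsStrictExt L M p f) :
    ∀ x ∈ (↑(Substructure.closure L (M := M) (posOrbitSet f p.source)) : Set M),
      f x ∈ (↑(Substructure.closure L (M := M) (posOrbitSet f p.source)) : Set M) := by
  set N := Substructure.closure L (M := M) (posOrbitSet f p.source) with hN
  let T : L.Substructure M :=
    { carrier := {x | x ∈ N ∧ f x ∈ N}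
      fun_mem := by
        intro k F a ha
        refine ⟨N.fun_mem F a fun i => (ha i).1, ?_⟩
        rw [PD_qf_funMap hf.2.1 (PD_src_closed hf) F a
          (fun i => PD_N_sub hf (ha i).1)]
        exact N.fun_mem F _ fun i => (ha i).2 }
  have hsub : posOrbitSet f p.source ⊆ (T : Set M) := by
    rintro y ⟨x, hx, n, rfl⟩
    refine ⟨Substructure.subset_closure ⟨x, hx, n, rfl⟩, ?_⟩
    rw [← Function.iterate_succ_apply' (⇑f)]
    exact Substructure.subset_closure ⟨x, hx, n + 1, rfl⟩
  intro x hx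
  exact ((Substructure.closure_le.2 hsub) hx).2

lemma PD_iterN (hf : IsStrictExt L M p f) (n : ℕ) :
    ∀ y ∈ (↑(Substructure.closure L (M := M) (posOrbitSet f p.source)) : Set M),
      (⇑f)^[n] y ∈ (↑(Substructure.closure L (M := M) (posOrbitSet f p.source)) : Set M) :=
  fun y hy => Set.MapsTo.iterate (fun z hz => PD_mapsN hf z hz) n hy

lemma PD_cover (hf : IsStrictExt L M p f) :
    ∀ x ∈ f.source, ∃ n : ℕ,
      (⇑f)^[n] x ∈ (↑(Substructure.closure L (M := M) (posOrbitSet f p.source)) : Set M) := by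
  classical
  set N := Substructure.closure L (M := M) (posOrbitSet f p.source) with hN
  let T : L.Substructure M :=
    { carrier := {x | x ∈ f.source ∧ ∃ n : ℕ, (⇑f)^[n] x ∈ N}
      fun_mem := by
        intro k F a ha
        choose nn hnn using fun i => (ha i).2
        refine ⟨PD_src_closed hf F a fun i => (ha i).1, Finset.univ.sup nn, ?_⟩
        rw [PD_iter_funMap hf.2.1 hf.2.2.1 (PD_src_closed hf) _ F a fun i => (ha i).1]
        refine N.fun_mem F _ fun i => ?_
        have hle : nn i ≤ Finset.univ.sup nn := Finset.le_sup (Finset.mem_univ i)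
        have hsplit : Finset.univ.sup nn = (Finset.univ.sup nn - nn i) + nn i :=
          (Nat.sub_add_cancel hle).symm
        rw [hsplit, Function.iterate_add_apply]
        exact PD_iterN hf _ _ (hnn i) }
  have hsub : orbitSet f p.source ⊆ (T : Set M) := by
    rintro y ⟨x, hx, n, rfl | rfl⟩
    · exact ⟨PD_iter_mem hf.2.2.1 n (hf.1.1 hx),
        0, Substructure.subset_closure ⟨x, hx, n, rfl⟩⟩
    · refine ⟨PD_symm_iter_mem hf.2.2.1 n (hf.1.1 hx), n, ?_⟩
      rw [PD_cancel' hf.2.2.1 n (hf.1.1 hx)]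
      exact Substructure.subset_closure ⟨x, hx, 0, rfl⟩
  intro x hx
  rw [hf.2.2.2] at hx
  exact ((Substructure.closure_le.2 hsub) hx).2

lemma PD_restrict_pos (hf : IsStrictExt L M p f) :
    ∃ f' : PartialEquiv M M, ⇑f' = ⇑f ∧
      f'.source = (↑(Substructure.closure L (M := M) (posOrbitSet f p.source)) : Set M) ∧
      IsPosStrictExt L M p f' := by
  set N := Substructure.closure L (M := M) (posOrbitSet f p.source) with hN
  refine ⟨⟨⇑f, ⇑f.symm, (↑N : Set M), ⇑f '' (↑N : Set M),
    fun x hx => Set.mem_image_of_mem _ hx,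
    ?_, fun x hx => f.left_inv (PD_N_sub hf hx), ?_⟩, rfl, rfl, ?_, ?_, ?_, ?_⟩
  · rintro y ⟨x, hx, rfl⟩
    rw [f.left_inv (PD_N_sub hf hx)]
    exact hx
  · rintro y ⟨x, hx, rfl⟩
    rw [f.left_inv (PD_N_sub hf hx)]
  · exact ⟨fun x hx => Substructure.subset_closure ⟨x, hx, 0, rfl⟩,
      fun x hx => hf.1.2 x hx⟩
  · intro k φ hφ x hx
    exact hf.2.1 k φ hφ x fun i => PD_N_sub hf (hx i)
  · rintro y ⟨x, hx, rfl⟩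
    exact PD_mapsN hf x hx
  · rfl

end PDStrict

section PDTheta

open Set Function FirstOrder.Language

variable {L : FirstOrder.Language} {M : Type*} [L.Structure M]

open Classical in
/-- The extension of `θ` from the positive part to the full domain. -/
noncomputable def ThetaFun (f g θ : PartialEquiv M M) (Nf : Set M) : M → M :=
  fun x => if h : ∃ n : ℕ, (⇑f)^[n] x ∈ Nf then
    (⇑g.symm)^[h.choose] (θ ((⇑f)^[h.choose] x)) else x

lemma PD_theta_eq (f g θ : PartialEquiv M M) (Nf Ng : Set M)
    (hfN : ∀ x ∈ Nf, f x ∈ Nf) (hNgS : Ng ⊆ g.source)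
    (hθmem : ∀ x ∈ Nf, θ x ∈ Ng)
    (hcomm : ∀ x ∈ Nf, θ (f x) = g (θ x))
    {x : M} {n : ℕ} (hn : (⇑f)^[n] x ∈ Nf) :
    ThetaFun f g θ Nf x = (⇑g.symm)^[n] (θ ((⇑f)^[n] x)) := by
  have hex : ∃ m : ℕ, (⇑f)^[m] x ∈ Nf := ⟨n, hn⟩
  have hstep : ∀ m : ℕ, (⇑f)^[m] x ∈ Nf →
      (⇑g.symm)^[m+1] (θ ((⇑f)^[m+1] x)) = (⇑g.symm)^[m] (θ ((⇑f)^[m] x)) := by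
    intro m hm
    rw [Function.iterate_succ_apply' (⇑f), hcomm _ hm,
      Function.iterate_succ_apply (⇑g.symm), g.left_inv (hNgS (hθmem _ hm))]
  have hmono : ∀ a b : ℕ, a ≤ b → (⇑f)^[a] x ∈ Nf →
      (⇑g.symm)^[b] (θ ((⇑f)^[b] x)) = (⇑g.symm)^[a] (θ ((⇑f)^[a] x)) := by
    intro a b hab ha
    induction b, hab using Nat.le_induction with
    | base => rfl
    | succ b hab ih =>
      have hb : (⇑f)^[b] x ∈ Nf := by
        have hsplit : b = (b - a) + a := (Nat.sub_add_cancel hab).symm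
        rw [hsplit, Function.iterate_add_apply]
        exact Set.MapsTo.iterate (fun z hz => hfN z hz) _ ha
      rw [hstep b hb, ih]
  have hch := hex.choose_spec
  unfold ThetaFun
  rw [dif_pos hex]
  rcases le_total hex.choose n with h | h
  · exact (hmono _ _ h hch).symm
  · exact hmono _ _ h hn

end PDTheta

/-- If a finite partial automorphism `p` is positively determined (all positively strict
extensions are isomorphic over `p`), then it is determined (all strict extensions are
isomorphic over `p`). -/
theorem positively_determined_is_determined
    (L : FirstOrder.Language) (M : Type*) [L.Structure M]
    (p : PartialEquiv M M) (hfin : p.source.Finite) (hp : QFPreserving L M p)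
    (hpos : ∀ f g : PartialEquiv M M,
      IsPosStrictExt L M p f → IsPosStrictExt L M p g → IsoOver L M p f g) :
    ∀ f g : PartialEquiv M M,
      IsStrictExt L M p f → IsStrictExt L M p g → IsoOver L M p f g := by
  intro f g hf hg
  classical
  obtain ⟨f', hf'coe, hf'src, hf'pos⟩ := PD_restrict_pos hf
  obtain ⟨g', hg'coe, hg'src, hg'pos⟩ := PD_restrict_pos hg
  obtain ⟨θ, hθs, hθt, hθqf, hθfix, hθc⟩ := hpos f' g' hf'pos hg'pos
  set Nf : Set M := (↑(Substructure.closure L (M := M) (posOrbitSet f p.source)) : Set M)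
    with hNfdef
  set Ng : Set M := (↑(Substructure.closure L (M := M) (posOrbitSet g p.source)) : Set M)
    with hNgdef
  have hstf := hf.2.2.1
  have hstg := hg.2.2.1
  have hNfS : Nf ⊆ f.source := PD_N_sub hf
  have hNgS : Ng ⊆ g.source := PD_N_sub hg
  have hfN : ∀ x ∈ Nf, f x ∈ Nf := PD_mapsN hf
  have hgN : ∀ x ∈ Ng, g x ∈ Ng := PD_mapsN hg
  have hiterNf : ∀ (n : ℕ), ∀ y ∈ Nf, (⇑f)^[n] y ∈ Nf := PD_iterN hf
  have hθsrc : θ.source = Nf := by rw [hθs, hf'src]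
  have hθtgt : θ.target = Ng := by rw [hθt, hg'src]
  have hθmem : ∀ x ∈ Nf, θ x ∈ Ng := fun x hx => hθtgt ▸ θ.map_source (hθsrc ▸ hx)
  have hθmem' : ∀ y ∈ Ng, θ.symm y ∈ Nf := fun y hy => hθsrc ▸ θ.map_target (hθtgt ▸ hy)
  have hcomm : ∀ x ∈ Nf, θ (f x) = g (θ x) := by
    intro x hx
    have h := hθc x (by rw [hf'src]; exact hx)
    rwa [show f' x = f x from congrFun hf'coe x,
      show g' (θ x) = g (θ x) from congrFun hg'coe (θ x)] at h
  have hcomm' : ∀ y ∈ Ng, θ.symm (g y) = f (θ.symm y) := by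
    intro y hy
    have hx : θ.symm y ∈ Nf := hθmem' y hy
    have h1 : θ (θ.symm y) = y := θ.right_inv (hθtgt ▸ hy)
    have h2 : θ (f (θ.symm y)) = g y := by rw [hcomm _ hx, h1]
    calc θ.symm (g y) = θ.symm (θ (f (θ.symm y))) := by rw [h2]
      _ = f (θ.symm y) := θ.left_inv (hθsrc ▸ hfN _ hx)
  have hcovf : ∀ x ∈ f.source, ∃ n : ℕ, (⇑f)^[n] x ∈ Nf := PD_cover hf
  have hcovg : ∀ y ∈ g.source, ∃ n : ℕ, (⇑g)^[n] y ∈ Ng := PD_cover hg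
  have TEQ : ∀ {x : M} {n : ℕ}, (⇑f)^[n] x ∈ Nf →
      ThetaFun f g θ Nf x = (⇑g.symm)^[n] (θ ((⇑f)^[n] x)) :=
    fun hn => PD_theta_eq f g θ Nf Ng hfN hNgS hθmem hcomm hn
  have TEQ' : ∀ {y : M} {n : ℕ}, (⇑g)^[n] y ∈ Ng →
      ThetaFun g f θ.symm Ng y = (⇑f.symm)^[n] (θ.symm ((⇑g)^[n] y)) :=
    fun hn => PD_theta_eq g f θ.symm Ng Nf hgN hNfS hθmem' hcomm' hn
  -- membership
  have hΘmem : ∀ x ∈ f.source, ThetaFun f g θ Nf x ∈ g.source := by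
    intro x hx
    obtain ⟨n, hn⟩ := hcovf x hx
    rw [TEQ hn]
    exact PD_symm_iter_mem hstg n (hNgS (hθmem _ hn))
  have hΘ'mem : ∀ y ∈ g.source, ThetaFun g f θ.symm Ng y ∈ f.source := by
    intro y hy
    obtain ⟨n, hn⟩ := hcovg y hy
    rw [TEQ' hn]
    exact PD_symm_iter_mem hstf n (hNfS (hθmem' _ hn))
  -- inverses
  have hΘinv : ∀ x ∈ f.source, ThetaFun g f θ.symm Ng (ThetaFun f g θ Nf x) = x := by
    intro x hx
    obtain ⟨n, hn⟩ := hcovf x hx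
    have hwNg : θ ((⇑f)^[n] x) ∈ Ng := hθmem _ hn
    have h2 : (⇑g)^[n] (ThetaFun f g θ Nf x) = θ ((⇑f)^[n] x) := by
      rw [TEQ hn]
      exact PD_cancel' hstg n (hNgS hwNg)
    rw [TEQ' (by rw [h2]; exact hwNg), h2, θ.left_inv (hθsrc ▸ hn)]
    exact PD_cancel hstf n hx
  have hΘ'inv : ∀ y ∈ g.source, ThetaFun f g θ Nf (ThetaFun g f θ.symm Ng y) = y := by
    intro y hy
    obtain ⟨n, hn⟩ := hcovg y hy
    have hwNf : θ.symm ((⇑g)^[n] y) ∈ Nf := hθmem' _ hn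
    have h2 : (⇑f)^[n] (ThetaFun g f θ.symm Ng y) = θ.symm ((⇑g)^[n] y) := by
      rw [TEQ' hn]
      exact PD_cancel' hstf n (hNfS hwNf)
    rw [TEQ (by rw [h2]; exact hwNf), h2, θ.right_inv (hθtgt ▸ hn)]
    exact PD_cancel hstg n hy
  refine ⟨⟨ThetaFun f g θ Nf, ThetaFun g f θ.symm Ng, f.source, g.source,
    hΘmem, hΘ'mem, hΘinv, hΘ'inv⟩, rfl, rfl, ?_, ?_, ?_⟩
  · -- QFPreserving
    intro k φ hφ x hx
    choose nn hnn using fun i => hcovf (x i) (hx i)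
    set m : ℕ := Finset.univ.sup nn with hm
    have hmm : ∀ i, (⇑f)^[m] (x i) ∈ Nf := by
      intro i
      have hle : nn i ≤ m := Finset.le_sup (Finset.mem_univ i)
      have hsplit : m = (m - nn i) + nn i := (Nat.sub_add_cancel hle).symm
      rw [hsplit, Function.iterate_add_apply]
      exact hiterNf _ _ (hnn i)
    have c1 : φ.Realize x ↔ φ.Realize fun i => (⇑f)^[m] (x i) :=
      PD_qf_iter hf.2.1 hstf m φ hφ x hx
    have c2 : (φ.Realize fun i => (⇑f)^[m] (x i)) ↔
        φ.Realize fun i => θ ((⇑f)^[m] (x i)) :=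
      hθqf k φ hφ _ (fun i => by rw [hθsrc]; exact hmm i)
    have hstg' : g.symm.source = g.symm.target := by
      rw [PartialEquiv.symm_source, PartialEquiv.symm_target, hstg]
    have c3 : (φ.Realize fun i => θ ((⇑f)^[m] (x i))) ↔
        φ.Realize fun i => (⇑g.symm)^[m] (θ ((⇑f)^[m] (x i))) :=
      PD_qf_iter (PD_qf_symm hg.2.1) hstg' m φ hφ _
        (fun i => by
          rw [PartialEquiv.symm_source, ← hstg]
          exact hNgS (hθmem _ (hmm i)))
    have c4 : (fun i => (⇑g.symm)^[m] (θ ((⇑f)^[m] (x i)))) =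
        fun i => ThetaFun f g θ Nf (x i) :=
      funext fun i => (TEQ (hmm i)).symm
    have := (c1.trans c2).trans c3
    rw [c4] at this
    exact this
  · -- fixes p.source
    intro x hx
    have hx0 : (⇑f)^[0] x ∈ Nf := Substructure.subset_closure ⟨x, hx, 0, rfl⟩
    have := TEQ hx0
    simp only [Function.iterate_zero_apply] at this
    show ThetaFun f g θ Nf x = x
    rw [this]
    have hxf' : x ∈ f'.source := by rw [hf'src]; exact hx0
    exact hθfix x hx
  · -- commutes with f and g
    intro x hx
    obtain ⟨n, hn⟩ := hcovf x hx
    have hn' : (⇑f)^[n] (f x) ∈ Nf := by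
      rw [← Function.iterate_succ_apply (⇑f), Function.iterate_succ_apply' (⇑f)]
      exact hfN _ hn
    show ThetaFun f g θ Nf (f x) = g (ThetaFun f g θ Nf x)
    rw [TEQ hn', TEQ hn, ← Function.iterate_succ_apply (⇑f),
      Function.iterate_succ_apply' (⇑f), hcomm _ hn]
    exact PD_comm hstg n (hNgS (hθmem _ hn))
end

section
/- Let T be a meet-tree and let f, g be partial automorphisms of T whose domains are closed under ∧, such that for every η ∈ dom(f) there exists a_η ∈ dom(g) with a_η ≥ η and g restricted to {x ∈ T : x ≤ a_η} is contained in f. Then f ∪ g is a partial automorphism of T, and its domain is closed under ∧. -/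
/-- A partial automorphism of a meet-tree, given by its graph `R ⊆ T × T`: an
order-isomorphism between two subsets of `T` closed under meet, preserving `≤` and `⊓`. -/
def IsPAut {T : Type*} [SemilatticeInf T] (R : Set (T × T)) : Prop :=
  (∀ ⦃a b c d : T⦄, (a, b) ∈ R → (c, d) ∈ R → (a ≤ c ↔ b ≤ d)) ∧
  (∀ ⦃a b c d : T⦄, (a, b) ∈ R → (c, d) ∈ R → (a ⊓ c, b ⊓ d) ∈ R)

/-- Let `T` be a meet-tree and `f, g` partial automorphisms of `T` with domains closed
under `⊓`, such that for every `η ∈ dom f` there is `a_η ∈ dom g` with `a_η ≥ η` and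
`g` restricted to `{x | x ≤ a_η}` contained in `f`.  Then `f ∪ g` is a partial
automorphism of `T` (with domain closed under `⊓`). -/
theorem meetTree_union_partial_automorphism {T : Type*} [SemilatticeInf T]
    (hsl : ∀ a b c : T, b ≤ a → c ≤ a → b ≤ c ∨ c ≤ b)
    (f g : Set (T × T)) (hf : IsPAut f) (hg : IsPAut g)
    (hcover : ∀ η b : T, (η, b) ∈ f → ∃ aη bη : T, (aη, bη) ∈ g ∧ η ≤ aη ∧
      ∀ x y : T, (x, y) ∈ g → x ≤ aη → (x, y) ∈ f) :
    IsPAut (f ∪ g) := by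
  constructor
  · rintro a b c d (hab | hab) (hcd | hcd)
    · exact hf.1 hab hcd
    · -- (a,b) ∈ f, (c,d) ∈ g
      obtain ⟨aη, bη, hg1, haη, hsub⟩ := hcover a b hab
      have hηf : (aη, bη) ∈ f := hsub _ _ hg1 le_rfl
      have hb : b ≤ bη := (hf.1 hab hηf).mp haη
      have h1f : (c ⊓ aη, d ⊓ bη) ∈ f := hsub _ _ (hg.2 hcd hg1) inf_le_right
      have hiff := hf.1 hab h1f
      constructor
      · intro h; exact (hiff.mp (le_inf h haη)).trans inf_le_left
      · intro h; exact (hiff.mpr (le_inf h hb)).trans inf_le_left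
    · -- (a,b) ∈ g, (c,d) ∈ f
      obtain ⟨aη, bη, hg1, haη, hsub⟩ := hcover c d hcd
      constructor
      · intro h
        have ha : a ≤ aη := h.trans haη
        have hb : b ≤ bη := (hg.1 hab hg1).mp ha
        have habf : (a, b) ∈ f := by
          have := hsub _ _ (hg.2 hab hg1) inf_le_right
          rwa [inf_eq_left.mpr ha, inf_eq_left.mpr hb] at this
        exact (hf.1 habf hcd).mp h
      · intro h
        have hd : d ≤ bη := (hf.1 hcd (hsub _ _ hg1 le_rfl)).mp haη
        have hb : b ≤ bη := h.trans hd
        have ha : a ≤ aη := (hg.1 hab hg1).mpr hb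
        have habf : (a, b) ∈ f := by
          have := hsub _ _ (hg.2 hab hg1) inf_le_right
          rwa [inf_eq_left.mpr ha, inf_eq_left.mpr hb] at this
        exact (hf.1 habf hcd).mpr h
    · exact hg.1 hab hcd
  · rintro a b c d (hab | hab) (hcd | hcd)
    · exact Or.inl (hf.2 hab hcd)
    · -- (a,b) ∈ f, (c,d) ∈ g
      obtain ⟨aη, bη, hg1, haη, hsub⟩ := hcover a b hab
      have hηf : (aη, bη) ∈ f := hsub _ _ hg1 le_rfl
      have hb : b ≤ bη := (hf.1 hab hηf).mp haη
      have h1f : (c ⊓ aη, d ⊓ bη) ∈ f := hsub _ _ (hg.2 hcd hg1) inf_le_right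
      have h2 := hf.2 hab h1f
      left
      have e1 : a ⊓ (c ⊓ aη) = a ⊓ c := by
        rw [inf_comm c aη, ← inf_assoc, inf_eq_left.mpr haη]
      have e2 : b ⊓ (d ⊓ bη) = b ⊓ d := by
        rw [inf_comm d bη, ← inf_assoc, inf_eq_left.mpr hb]
      rwa [e1, e2] at h2
    · -- (a,b) ∈ g, (c,d) ∈ f
      obtain ⟨aη, bη, hg1, haη, hsub⟩ := hcover c d hcd
      have hηf : (aη, bη) ∈ f := hsub _ _ hg1 le_rfl
      have hd : d ≤ bη := (hf.1 hcd hηf).mp haη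
      have h1f : (a ⊓ aη, b ⊓ bη) ∈ f := hsub _ _ (hg.2 hab hg1) inf_le_right
      have h2 := hf.2 h1f hcd
      left
      have e1 : a ⊓ aη ⊓ c = a ⊓ c := by
        rw [inf_assoc, inf_eq_right.mpr haη]
      have e2 : b ⊓ bη ⊓ d = b ⊓ d := by
        rw [inf_assoc, inf_eq_right.mpr hd]
      rwa [e1, e2] at h2
    · exact Or.inr (hg.2 hab hcd)
end

section
/- Let L be a dense linear order unbounded from below, let g be a finite partial automorphism of L (a finite partial order-preserving injection), and let a, b ∈ L satisfy b ≤ g(a) ≤ a (in particular a ∈ dom(g)). Then there exist d₁, d₂ ∈ L such that g ∪ {(d₁, b), (b, d₂)} is a partial automorphism of L. -/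
/-- A partial automorphism of a linear order, given by its graph: for all pairs in the
graph, `x ≤ y ↔ p x ≤ p y`. -/
def IsOrderPAut {L : Type*} [LinearOrder L] (G : Set (L × L)) : Prop :=
  ∀ ⦃p q : L × L⦄, p ∈ G → q ∈ G → (p.1 ≤ q.1 ↔ p.2 ≤ q.2)

lemma isOrderPAut_swap {L : Type*} [LinearOrder L] {G : Set (L × L)}
    (hG : IsOrderPAut G) : IsOrderPAut (Prod.swap '' G) := by
  rintro p q ⟨p', hp', rfl⟩ ⟨q', hq', rfl⟩
  exact (hG hp' hq').symm

lemma ext_left {L : Type*} [LinearOrder L] [DenselyOrdered L] [NoMinOrder L]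
    (G : Set (L × L)) (hG : IsOrderPAut G) (hfin : G.Finite)
    (b : L) (hb : ∃ p ∈ G, b ≤ p.2) :
    ∃ d, IsOrderPAut (G ∪ {(d, b)}) := by
  have key : ∃ d : L, ∀ p ∈ G, (d ≤ p.1 ↔ b ≤ p.2) ∧ (p.1 ≤ d ↔ p.2 ≤ b) := by
    by_cases hmem : ∃ p ∈ G, p.2 = b
    · obtain ⟨p₀, hp₀, hpb⟩ := hmem
      refine ⟨p₀.1, fun p hp => ⟨?_, ?_⟩⟩
      · simpa [hpb] using hG hp₀ hp
      · simpa [hpb] using hG hp hp₀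
    · push_neg at hmem
      set S : Set L := {x | ∃ y, (x, y) ∈ G ∧ b < y} with hSdef
      set T : Set L := {x | ∃ y, (x, y) ∈ G ∧ y < b} with hTdef
      have hSfin : S.Finite := by
        apply (hfin.image Prod.fst).subset
        rintro x ⟨y, hxy, -⟩
        exact ⟨(x, y), hxy, rfl⟩
      have hTfin : T.Finite := by
        apply (hfin.image Prod.fst).subset
        rintro x ⟨y, hxy, -⟩
        exact ⟨(x, y), hxy, rfl⟩
      have hSne : S.Nonempty := by
        obtain ⟨p, hp, hbp⟩ := hb
        exact ⟨p.1, p.2, by simpa using hp, lt_of_le_of_ne hbp (Ne.symm (hmem p hp))⟩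
      -- the min of S
      obtain ⟨M, hMS, hMmin'⟩ := Set.exists_min_image S id hSfin hSne
      -- key order fact: every element of T is < M
      have hTM : ∀ x ∈ T, x < M := by
        rintro x ⟨y, hxy, hyb⟩
        obtain ⟨yM, hMy, hby⟩ := hMS
        have h2 := hG hMy hxy
        simp only at h2
        by_contra h
        push_neg at h
        exact absurd (h2.mp h) (not_le.mpr (hyb.trans hby))
      have main : ∃ d : L, ∀ p ∈ G, (d < p.1 ∧ b < p.2) ∨ (p.1 < d ∧ p.2 < b) := by
        rcases T.eq_empty_or_nonempty with hT | hTne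
        · obtain ⟨d, hd⟩ := exists_lt M
          refine ⟨d, fun p hp => ?_⟩
          have hyb : b < p.2 := by
            rcases lt_trichotomy p.2 b with h | h | h
            · exact absurd (show p.1 ∈ T from ⟨p.2, by simpa using hp, h⟩) (by simp [hT])
            · exact absurd h (hmem p hp)
            · exact h
          have hMp : M ≤ p.1 := hMmin' _ ⟨p.2, by simpa using hp, hyb⟩
          exact Or.inl ⟨hd.trans_le hMp, hyb⟩
        · obtain ⟨m, hmT, hmmax'⟩ := Set.exists_max_image T id hTfin hTne
          obtain ⟨d, hmd, hdM⟩ := exists_between (hTM m hmT)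
          refine ⟨d, fun p hp => ?_⟩
          rcases lt_trichotomy p.2 b with h | h | h
          · have hpm : p.1 ≤ m := hmmax' _ ⟨p.2, by simpa using hp, h⟩
            exact Or.inr ⟨hpm.trans_lt hmd, h⟩
          · exact absurd h (hmem p hp)
          · have hMp : M ≤ p.1 := hMmin' _ ⟨p.2, by simpa using hp, h⟩
            exact Or.inl ⟨hdM.trans_le hMp, h⟩
      obtain ⟨d, hd⟩ := main
      refine ⟨d, fun p hp => ?_⟩
      rcases hd p hp with ⟨h1, h2⟩ | ⟨h1, h2⟩
      · exact ⟨iff_of_true h1.le h2.le, iff_of_false (not_le.mpr h1) (not_le.mpr h2)⟩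
      · exact ⟨iff_of_false (not_le.mpr h1) (not_le.mpr h2), iff_of_true h1.le h2.le⟩
  obtain ⟨d, hd⟩ := key
  refine ⟨d, ?_⟩
  rintro p q (hp | hp) (hq | hq)
  · exact hG hp hq
  · simp only [Set.mem_singleton_iff] at hq; subst hq
    exact (hd p hp).2
  · simp only [Set.mem_singleton_iff] at hp; subst hp
    exact (hd q hq).1
  · simp only [Set.mem_singleton_iff] at hp hq; subst hp; subst hq
    simp

lemma ext_right {L : Type*} [LinearOrder L] [DenselyOrdered L] [NoMinOrder L]
    (G : Set (L × L)) (hG : IsOrderPAut G) (hfin : G.Finite)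
    (b : L) (hb : ∃ p ∈ G, b ≤ p.1) :
    ∃ d, IsOrderPAut (G ∪ {(b, d)}) := by
  obtain ⟨d, hd⟩ := ext_left (Prod.swap '' G) (isOrderPAut_swap hG)
    (hfin.image _) b (by obtain ⟨p, hp, h⟩ := hb; exact ⟨p.swap, ⟨p, hp, rfl⟩, h⟩)
  refine ⟨d, ?_⟩
  have : G ∪ {(b, d)} = Prod.swap '' ((Prod.swap '' G) ∪ {(d, b)}) := by
    rw [Set.image_union, Set.image_image]
    simp [Prod.swap_swap]
  rw [this]
  exact isOrderPAut_swap hd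

/-- Let `L` be a dense linear order unbounded from below, `g` a finite partial
automorphism of `L`, and `a, b ∈ L` with `b ≤ g a ≤ a`.  Then there are `d₁, d₂ ∈ L`
such that `g ∪ {(d₁, b), (b, d₂)}` is a partial automorphism of `L`. -/
theorem dense_linear_extend_partial_automorphism {L : Type*} [LinearOrder L]
    [DenselyOrdered L] [NoMinOrder L]
    (G : Set (L × L)) (hG : IsOrderPAut G) (hfin : G.Finite)
    (a b c : L) (haG : (a, c) ∈ G) (hbc : b ≤ c) (hca : c ≤ a) :
    ∃ d₁ d₂ : L, IsOrderPAut (G ∪ {(d₁, b), (b, d₂)}) := by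
  obtain ⟨d₂, hd₂⟩ := ext_right G hG hfin b ⟨(a, c), haG, hbc.trans hca⟩
  obtain ⟨d₁, hd₁⟩ := ext_left (G ∪ {(b, d₂)}) hd₂ (hfin.union (Set.finite_singleton _))
    b ⟨(a, c), Or.inl haG, hbc⟩
  refine ⟨d₁, d₂, ?_⟩
  have : G ∪ {(d₁, b), (b, d₂)} = (G ∪ {(b, d₂)}) ∪ {(d₁, b)} := by
    ext p
    simp only [Set.mem_union, Set.mem_insert_iff, Set.mem_singleton_iff]
    tauto
  rw [this]
  exact hd₁
end

section
/- For every integer k > 1, the class of meet-trees of arity at most k equipped with an automorphism does not have the amalgamation property. Concretely: let B = {b}, C₁ = B ∪ {c₁¹, …, c₁ᵏ} where the c₁ⁱ are pairwise incomparable with all pairwise meets equal to b, and C₂ = B ∪ {c₂} with c₂ > b. Let f₁ be the automorphism of C₁ fixing b and cyclically permuting c₁¹ ↦ c₁² ↦ … ↦ c₁ᵏ ↦ c₁¹, and let f₂ be the identity on C₂. Then there is no meet-tree D of arity at most k with an automorphism g and meet-tree embeddings of (C₁, f₁) and (C₂, f₂) into (D, g) agreeing on b. -/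
/-- For every integer `k > 1`, the class of meet-trees of arity at most `k` with an
automorphism fails the amalgamation property.  Concretely: there is no meet-tree `D` of
arity at most `k` with an automorphism `g` containing a fixed point `b`, a fixed point
`c₂ > b`, and a `g`-cycle `c 0, …, c (k-1)` of pairwise-incomparable elements above `b`
whose pairwise meets are all `b`. -/
theorem no_amalgamation_bounded_arity (k : ℕ) (hk : 1 < k)
    (D : Type*) [SemilatticeInf D]
    (hsl : ∀ a b c : D, b ≤ a → c ≤ a → b ≤ c ∨ c ≤ b)
    (harity : ¬ ∃ (a : D) (x : Fin (k + 1) → D), Function.Injective x ∧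
      ∀ i j : Fin (k + 1), i ≠ j → x i ⊓ x j = a ∧ x i ≠ a) :
    ¬ ∃ (g : D ≃o D) (b c₂ : D) (c : Fin k → D),
      g b = b ∧ g c₂ = c₂ ∧ b < c₂ ∧ (∀ i : Fin k, b < c i) ∧
      (∀ i j : Fin k, i ≠ j → c i ⊓ c j = b) ∧
      (∀ i : Fin k, g (c i) = c (i + ⟨1, by omega⟩)) := by
  rintro ⟨g, b, c₂, c, hgb, hgc₂, hbc₂, hbc, hmeet, hcyc⟩
  have hle : ∀ i, b ≤ c₂ ⊓ c i := fun i => le_inf hbc₂.le (hbc i).le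
  -- key: all meets with c₂ are b
  have key : ∀ i, c₂ ⊓ c i = b := by
    by_contra h
    push_neg at h
    obtain ⟨i, hi⟩ := h
    have hi' : b < c₂ ⊓ c i := lt_of_le_of_ne (hle i) (Ne.symm hi)
    set j : Fin k := i + ⟨1, by omega⟩ with hj
    have hne : i ≠ j := by
      intro h
      have hv := congrArg Fin.val h
      simp only [hj, Fin.add_def] at hv
      rcases Nat.lt_or_ge (i.val + 1) k with h1 | h1
      · rw [Nat.mod_eq_of_lt h1] at hv; omega
      · have hik : i.val + 1 = k := by omega
        rw [hik, Nat.mod_self] at hv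
        omega
    have hj' : b < c₂ ⊓ c j := by
      have := g.strictMono hi'
      rwa [hgb, map_inf, hgc₂, hcyc i] at this
    rcases hsl c₂ (c₂ ⊓ c i) (c₂ ⊓ c j) inf_le_left inf_le_left with h1 | h1
    · have : c₂ ⊓ c i ≤ b := by
        rw [← hmeet i j hne]
        exact le_inf inf_le_right (h1.trans inf_le_right)
      exact absurd this hi'.not_ge
    · have : c₂ ⊓ c j ≤ b := by
        rw [← hmeet i j hne]
        exact le_inf (h1.trans inf_le_right) inf_le_right
      exact absurd this hj'.not_ge
  apply harity
  set x : Fin (k + 1) → D := Fin.snoc c c₂ with hx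
  have hgt : ∀ i : Fin (k + 1), b < x i := by
    intro i
    refine Fin.lastCases ?_ ?_ i
    · simpa [hx] using hbc₂
    · intro i; simpa [hx] using hbc i
  have hall : ∀ i j : Fin (k + 1), i ≠ j → x i ⊓ x j = b := by
    have hbase : ∀ i : Fin k, x (Fin.last k) ⊓ x i.castSucc = b := by
      intro i
      simpa [hx] using key i
    intro i j hij
    induction i using Fin.lastCases with
    | last =>
      induction j using Fin.lastCases with
      | last => exact absurd rfl hij
      | cast j' => exact hbase j'
    | cast i' =>
      induction j using Fin.lastCases with
      | last => rw [inf_comm]; exact hbase i'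
      | cast j' =>
        have hne : i' ≠ j' := fun h => hij (by rw [h])
        simpa [hx] using hmeet i' j' hne
  refine ⟨b, x, ?_, fun i j hij => ⟨hall i j hij, (hgt i).ne'⟩⟩
  intro i j hij
  by_contra hne
  have := hall i j hne
  rw [hij, inf_idem] at this
  exact (hgt j).ne' this
end

section
/- Let η = (η₀, …, η_n) be a k-spiral orbit in a meet-tree T under an automorphism f (i.e. f(η_i) = η_{i+1}, k is minimal positive with η_k comparable to η₀ and η_k ≠ η₀). Then for i, j ∈ [0, n], η_i is comparable to η_j if and only if i ≡ j (mod k). -/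
/-- Let `η` be the orbit of `η₀` under an automorphism `f` of a meet-tree, and suppose
it is a (non-cyclic) `k`-spiral, i.e. `k` is minimal positive such that `η k` is
comparable to and distinct from `η 0`.  Then `η i` and `η j` are comparable iff
`i ≡ j (mod k)`. -/
theorem spiral_comparable_iff_mod {T : Type*} [SemilatticeInf T]
    (hsl : ∀ a b c : T, b ≤ a → c ≤ a → b ≤ c ∨ c ≤ b)
    (f : T ≃o T) (η₀ : T) (η : ℕ → T) (hη : ∀ i, η i = (⇑f)^[i] η₀)
    (k : ℕ) (hk : 0 < k)
    (hnc : ∀ m : ℕ, 0 < m → η m ≠ η 0)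
    (hsp : η k < η 0 ∨ η 0 < η k)
    (hmin : ∀ m : ℕ, 0 < m → m < k → ¬(η m < η 0 ∨ η 0 < η m)) :
    ∀ i j : ℕ, (η i ≤ η j ∨ η j ≤ η i) ↔ i % k = j % k := by
  have hiter : ∀ (i : ℕ) (x y : T), (⇑f)^[i] x ≤ (⇑f)^[i] y ↔ x ≤ y := by
    intro i
    induction i with
    | zero => intro x y; simp
    | succ n ih =>
      intro x y
      rw [Function.iterate_succ_apply', Function.iterate_succ_apply', f.le_iff_le]
      exact ih x y
  have hshift : ∀ i m : ℕ, η (i + m) = (⇑f)^[i] (η m) := by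
    intro i m
    rw [hη, hη, Function.iterate_add_apply]
  have h0i : ∀ i : ℕ, η i = (⇑f)^[i] (η 0) := by
    intro i; simpa using hshift i 0
  -- A : η (i+m) ≤ η i ↔ η m ≤ η 0
  have A : ∀ i m : ℕ, η (i + m) ≤ η i ↔ η m ≤ η 0 := by
    intro i m
    rw [hshift i m, h0i i, hiter]
  have B : ∀ i m : ℕ, η i ≤ η (i + m) ↔ η 0 ≤ η m := by
    intro i m
    rw [hshift i m, h0i i, hiter]
  -- key: not comparable when d % k ≠ 0
  have key : ∀ d : ℕ, d % k ≠ 0 → ¬(η d ≤ η 0 ∨ η 0 ≤ η d) := by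
    intro d
    induction d using Nat.strong_induction_on with
    | _ d ih =>
      intro hd hc
      rcases lt_or_ge d k with hlt | hge
      · have hd0 : 0 < d := Nat.pos_of_ne_zero (by
          intro h; subst h; simp at hd)
        rcases hc with h | h
        · rcases h.lt_or_eq with h' | h'
          · exact hmin d hd0 hlt (Or.inl h')
          · exact hnc d hd0 h'
        · rcases h.lt_or_eq with h' | h'
          · exact hmin d hd0 hlt (Or.inr h')
          · exact hnc d hd0 h'.symm
      · set e := d - k with he
        have hde : d = k + e := by omega
        have hed : d = e + k := by omega
        have hlt' : e < d := by omega
        have hmode : e % k ≠ 0 := by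
          intro h
          apply hd
          have : d % k = (e + k) % k := by rw [← hed]
          rw [this, Nat.add_mod_right]
          exact h
        apply ih e hlt' hmode
        rcases hsp with hdes | hasc
        · rcases hc with h | h
          · -- η d ≤ η 0, η k ≤ η 0 : comparable below η 0
            rcases hsl (η 0) (η d) (η k) h hdes.le with h' | h'
            · exact Or.inl ((A k e).mp (by rwa [← hde]))
            · exact Or.inr ((B k e).mp (by rwa [← hde]))
          · -- η 0 ≤ η d, η k < η 0
            have : η k ≤ η d := le_trans hdes.le h
            exact Or.inr ((B k e).mp (by rwa [← hde]))
        · rcases hc with h | h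
          · -- η d ≤ η 0 < η k
            have : η d ≤ η k := le_trans h hasc.le
            exact Or.inl ((A k e).mp (by rwa [← hde]))
          · -- η 0 ≤ η d, and η e ≤ η d
            have hek : η e ≤ η (e + k) := (B e k).mpr hasc.le
            rw [← hed] at hek
            rcases hsl (η d) (η 0) (η e) h hek with h' | h'
            · exact Or.inr h'
            · exact Or.inl h'
  -- multiples are comparable
  have hmul : ∀ m : ℕ, η (m * k) ≤ η 0 ∨ η 0 ≤ η (m * k) := by
    intro m
    rcases hsp with hdes | hasc
    · left
      induction m with
      | zero => simp
      | succ n ihn =>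
        have : η (k + n * k) ≤ η k := (A k (n * k)).mpr ihn
        have h2 : η ((n + 1) * k) ≤ η k := by
          rwa [show (n + 1) * k = k + n * k by ring]
        exact le_trans h2 hdes.le
    · right
      induction m with
      | zero => simp
      | succ n ihn =>
        have : η k ≤ η (k + n * k) := (B k (n * k)).mpr ihn
        have h2 : η k ≤ η ((n + 1) * k) := by
          rwa [show (n + 1) * k = k + n * k by ring]
        exact le_trans hasc.le h2
  have main : ∀ i j : ℕ, i ≤ j → ((η i ≤ η j ∨ η j ≤ η i) ↔ i % k = j % k) := by
    intro i j hij
    set d := j - i with hdef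
    have hj : j = i + d := by omega
    have hcomp : (η i ≤ η j ∨ η j ≤ η i) ↔ (η d ≤ η 0 ∨ η 0 ≤ η d) := by
      rw [hj]
      constructor
      · rintro (h | h)
        · exact Or.inr ((B i d).mp h)
        · exact Or.inl ((A i d).mp h)
      · rintro (h | h)
        · exact Or.inr ((A i d).mpr h)
        · exact Or.inl ((B i d).mpr h)
    have hmod : (i % k = j % k) ↔ d % k = 0 := by
      constructor
      · intro h
        have : k ∣ d := (Nat.modEq_iff_dvd' hij).mp h
        obtain ⟨c, hc⟩ := this
        rw [hc]
        exact Nat.mul_mod_right k c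
      · intro h
        have : k ∣ d := Nat.dvd_of_mod_eq_zero h
        exact (Nat.modEq_iff_dvd' hij).mpr this
    rw [hcomp, hmod]
    constructor
    · intro h
      by_contra hne
      exact key d hne h
    · intro h
      obtain ⟨m, hm⟩ := Nat.dvd_of_mod_eq_zero h
      rw [hm, Nat.mul_comm]
      exact hmul m
  intro i j
  rcases le_total i j with h | h
  · exact main i j h
  · rw [or_comm, eq_comm]
    exact main j i h
end

section
/- Let η = (η_i)_{i≥0} be the orbit of a point under an automorphism f of a meet-tree T, and suppose it is a k-spiral (k minimal positive such that η_k is comparable to and distinct from η₀). Then for any i, j, l with i ≡ j (mod k) and i ≢ l (mod k), one has η_i ∧ η_l = η_j ∧ η_l. -/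
/-- Let `η` be the orbit of `η₀` under an automorphism `f` of a meet-tree, a
(non-cyclic) `k`-spiral.  If `i ≡ j (mod k)` and `i ≢ l (mod k)`, then
`η i ⊓ η l = η j ⊓ η l`. -/
theorem spiral_meet_eq_of_mod {T : Type*} [SemilatticeInf T]
    (hsl : ∀ a b c : T, b ≤ a → c ≤ a → b ≤ c ∨ c ≤ b)
    (f : T ≃o T) (η₀ : T) (η : ℕ → T) (hη : ∀ i, η i = (⇑f)^[i] η₀)
    (k : ℕ) (hk : 0 < k)
    (hnc : ∀ m : ℕ, 0 < m → η m ≠ η 0)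
    (hsp : η k < η 0 ∨ η 0 < η k)
    (hmin : ∀ m : ℕ, 0 < m → m < k → ¬(η m < η 0 ∨ η 0 < η m)) :
    ∀ i j l : ℕ, i % k = j % k → i % k ≠ l % k → η i ⊓ η l = η j ⊓ η l := by
  have hmono : ∀ (m : ℕ) (x y : T), (⇑f)^[m] x ≤ (⇑f)^[m] y ↔ x ≤ y := by
    intro m
    induction m with
    | zero => simp
    | succ n ih =>
      intro x y
      rw [Function.iterate_succ_apply', Function.iterate_succ_apply',
        f.le_iff_le]
      exact ih x y
  have hshift : ∀ m a b : ℕ, η (m + a) ≤ η (m + b) ↔ η a ≤ η b := by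
    intro m a b
    rw [hη (m + a), hη (m + b), Function.iterate_add_apply,
      Function.iterate_add_apply, hmono, ← hη, ← hη]
  have hshift_lt : ∀ m a b : ℕ, η (m + a) < η (m + b) ↔ η a < η b := by
    intro m a b
    rw [lt_iff_le_not_ge, lt_iff_le_not_ge, hshift, hshift]
  -- comparability of orbit points forces equal residues
  have hC : ∀ a b : ℕ, η a ≤ η b → a % k = b % k := by
    rcases hsp with hdesc | hasc
    · -- descending spiral
      have hchain : ∀ n : ℕ, η ((n + 1) * k) < η (n * k) := by
        intro n
        have h := (hshift_lt (n * k) k 0).mpr hdesc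
        simpa [Nat.succ_mul] using h
      have hle0 : ∀ n : ℕ, η (n * k) ≤ η 0 := by
        intro n
        induction n with
        | zero => simp
        | succ n ih => exact (hchain n).le.trans ih
      have hlt0 : ∀ n : ℕ, 0 < n → η (n * k) < η 0 := by
        intro n hn
        obtain ⟨m, rfl⟩ := Nat.exists_eq_succ_of_ne_zero hn.ne'
        exact (hchain m).trans_le (hle0 m)
      have hnotup : ∀ p : ℕ, 0 < p → ¬ η 0 ≤ η p := by
        intro p hp h
        have hup : ∀ n : ℕ, η 0 ≤ η (n * p) := by
          intro n
          induction n with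
          | zero => simp
          | succ n ih =>
            have h2 : η (n * p + 0) ≤ η (n * p + p) := (hshift (n * p) 0 p).mpr h
            exact ih.trans (by simpa [Nat.succ_mul] using h2)
        have h1 := hup k
        have h2 := hlt0 p hp
        rw [mul_comm] at h2
        exact absurd (h1.trans_lt h2) (lt_irrefl _)
      have hdvd : ∀ p : ℕ, η p ≤ η 0 → k ∣ p := by
        intro p hp
        by_cases hr : p % k = 0
        · exact Nat.dvd_of_mod_eq_zero hr
        · exfalso
          set q := p / k with hq
          set r := p % k with hrdef
          have hpe : q * k + r = p := by rw [mul_comm]; exact Nat.div_add_mod p k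
          have hrpos : 0 < r := Nat.pos_of_ne_zero hr
          have hrlt : r < k := Nat.mod_lt _ hk
          rcases hsl (η 0) (η p) (η (q * k)) hp (hle0 q) with h | h
          · have h1 : η r ≤ η 0 :=
              (hshift (q * k) r 0).mp (by rw [hpe]; simpa using h)
            exact hmin r hrpos hrlt (Or.inl (lt_of_le_of_ne h1 (hnc r hrpos)))
          · have h1 : η 0 ≤ η r :=
              (hshift (q * k) 0 r).mp (by rw [hpe]; simpa using h)
            exact hnotup r hrpos h1
      intro a b hab
      rcases le_or_gt b a with hba | hba
      · have hba' : b + (a - b) = a := by omega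
        have h1 : η (a - b) ≤ η 0 :=
          (hshift b (a - b) 0).mp (by rw [hba']; simpa using hab)
        have := (Nat.modEq_iff_dvd' hba).mpr (hdvd _ h1)
        exact this.symm
      · exfalso
        have hab2 : a + (b - a) = b := by omega
        have h1 : η 0 ≤ η (b - a) :=
          (hshift a 0 (b - a)).mp (by rw [hab2]; simpa using hab)
        exact hnotup (b - a) (by omega) h1
    · -- ascending spiral
      have hchain : ∀ n : ℕ, η (n * k) < η ((n + 1) * k) := by
        intro n
        have h := (hshift_lt (n * k) 0 k).mpr hasc
        simpa [Nat.succ_mul] using h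
      have hge0 : ∀ n : ℕ, η 0 ≤ η (n * k) := by
        intro n
        induction n with
        | zero => simp
        | succ n ih => exact ih.trans (hchain n).le
      have hgt0 : ∀ n : ℕ, 0 < n → η 0 < η (n * k) := by
        intro n hn
        obtain ⟨m, rfl⟩ := Nat.exists_eq_succ_of_ne_zero hn.ne'
        exact (hge0 m).trans_lt (hchain m)
      have hnotdown : ∀ p : ℕ, 0 < p → ¬ η p ≤ η 0 := by
        intro p hp h
        have hdown : ∀ n : ℕ, η (n * p) ≤ η 0 := by
          intro n
          induction n with
          | zero => simp
          | succ n ih =>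
            have h2 : η (n * p + p) ≤ η (n * p + 0) := (hshift (n * p) p 0).mpr h
            exact (by simpa [Nat.succ_mul] using h2 : η ((n + 1) * p) ≤ η (n * p)).trans ih
        have h1 := hdown k
        have h2 := hgt0 p hp
        rw [mul_comm] at h2
        exact absurd (h2.trans_le h1) (lt_irrefl _)
      have hdvd : ∀ p : ℕ, η 0 ≤ η p → k ∣ p := by
        intro p hp
        by_cases hr : p % k = 0
        · exact Nat.dvd_of_mod_eq_zero hr
        · exfalso
          set q := p / k with hq
          set r := p % k with hrdef
          have hpe : q * k + r = p := by rw [mul_comm]; exact Nat.div_add_mod p k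
          have hrpos : 0 < r := Nat.pos_of_ne_zero hr
          have hrlt : r < k := Nat.mod_lt _ hk
          have hkr_pos : 0 < k - r := by omega
          have hkr_lt : k - r < k := by omega
          have he : k - r + p = (q + 1) * k := by rw [Nat.succ_mul]; omega
          have h1 : η (k - r) ≤ η ((q + 1) * k) := by
            have h2 := (hshift (k - r) 0 p).mpr hp
            rw [he] at h2
            simpa using h2
          have h2 : η 0 ≤ η ((q + 1) * k) := hge0 (q + 1)
          rcases hsl (η ((q + 1) * k)) (η (k - r)) (η 0) h1 h2 with h | h
          · exact hmin _ hkr_pos hkr_lt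
              (Or.inl (lt_of_le_of_ne h (hnc _ hkr_pos)))
          · exact hmin _ hkr_pos hkr_lt
              (Or.inr (lt_of_le_of_ne h (Ne.symm (hnc _ hkr_pos))))
      intro a b hab
      rcases le_or_gt a b with hab' | hab'
      · have hab2 : a + (b - a) = b := by omega
        have h1 : η 0 ≤ η (b - a) :=
          (hshift a 0 (b - a)).mp (by rw [hab2]; simpa using hab)
        exact (Nat.modEq_iff_dvd' hab').mpr (hdvd _ h1)
      · exfalso
        have hba' : b + (a - b) = a := by omega
        have h1 : η (a - b) ≤ η 0 :=
          (hshift b (a - b) 0).mp (by rw [hba']; simpa using hab)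
        exact hnotdown (a - b) (by omega) h1
  -- one-step stability of meets
  have hA : ∀ i l : ℕ, i % k ≠ l % k → η (i + k) ⊓ η l = η i ⊓ η l := by
    intro i l hil
    have hmodik : (i + k) % k = i % k := Nat.add_mod_right i k
    rcases hsp with hdesc | hasc
    · have hik : η (i + k) ≤ η i := by
        have h := (hshift i k 0).mpr hdesc.le
        simpa using h
      apply le_antisymm
      · exact inf_le_inf_right _ hik
      · refine le_inf ?_ inf_le_right
        rcases hsl (η i) (η i ⊓ η l) (η (i + k)) inf_le_left hik with h | h
        · exact h
        · exfalso
          have h2 : η (i + k) ≤ η l := h.trans inf_le_right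
          have h3 := hC _ _ h2
          rw [hmodik] at h3
          exact hil h3
    · have hik : η i ≤ η (i + k) := by
        have h := (hshift i 0 k).mpr hasc.le
        simpa using h
      apply le_antisymm
      · refine le_inf ?_ inf_le_right
        rcases hsl (η (i + k)) (η (i + k) ⊓ η l) (η i) inf_le_left hik with h | h
        · exact h
        · exfalso
          have h2 : η i ≤ η l := h.trans inf_le_right
          exact hil (hC _ _ h2)
      · exact inf_le_inf_right _ hik
  -- multi-step stability
  have hAn : ∀ (m i l : ℕ), i % k ≠ l % k → η (i + m * k) ⊓ η l = η i ⊓ η l := by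
    intro m
    induction m with
    | zero => intro i l _; simp
    | succ m ih =>
      intro i l hil
      have hmod : (i + m * k) % k = i % k := by
        simp [Nat.add_mul_mod_self_right]
      have e : i + (m + 1) * k = (i + m * k) + k := by ring
      rw [e, hA (i + m * k) l (by rw [hmod]; exact hil), ih i l hil]
  intro i j l hij hil
  rcases le_total i j with h | h
  · obtain ⟨c, hc⟩ := (Nat.modEq_iff_dvd' h).mp hij
    have hj : j = i + c * k := by rw [mul_comm c k]; omega
    rw [hj]
    exact (hAn c i l hil).symm
  · have hjl : j % k ≠ l % k := by rw [← hij]; exact hil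
    obtain ⟨c, hc⟩ := (Nat.modEq_iff_dvd' h).mp hij.symm
    have hi : i = j + c * k := by rw [mul_comm c k]; omega
    rw [hi]
    exact hAn c j l hjl
end

section
/- Let η = (η_i)_{i≥0} be the orbit of a point under an automorphism f of a meet-tree T, and suppose it is a k-spiral. Then for any l > 0, if η₀ ∧ η_l ≠ η_l ∧ η_{2l}, then k divides l; hence (by the spiral property) η₀ < η_l < η_{2l} or η₀ > η_l > η_{2l}. -/
section Aux

variable {T : Type*} [SemilatticeInf T]

private lemma iter_le_iff (f : T ≃o T) (n : ℕ) {a b : T} :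
    (⇑f)^[n] a ≤ (⇑f)^[n] b ↔ a ≤ b := by
  induction n with
  | zero => simp
  | succ n ih =>
      rw [Function.iterate_succ_apply', Function.iterate_succ_apply', f.le_iff_le]
      exact ih

private lemma iter_lt_iff (f : T ≃o T) (n : ℕ) {a b : T} :
    (⇑f)^[n] a < (⇑f)^[n] b ↔ a < b := by
  simp [lt_iff_le_not_ge, iter_le_iff]

private lemma iter_inf (f : T ≃o T) (n : ℕ) (a b : T) :
    (⇑f)^[n] (a ⊓ b) = (⇑f)^[n] a ⊓ (⇑f)^[n] b := by
  induction n with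
  | zero => simp
  | succ n ih =>
      rw [Function.iterate_succ_apply', Function.iterate_succ_apply',
        Function.iterate_succ_apply', ih, map_inf]

/-- `a := x ⊓ F x` satisfies `a ≤ F^[n] a` whenever `a ≤ F a`. -/
private lemma core_a_le (F : T ≃o T) (x : T) (h : x ⊓ F x ≤ F (x ⊓ F x)) (n : ℕ) :
    x ⊓ F x ≤ (⇑F)^[n] (x ⊓ F x) := by
  induction n with
  | zero => simp
  | succ n ih =>
      refine ih.trans ?_
      rw [Function.iterate_succ_apply]
      exact (iter_le_iff F n).mpr h

private lemma core_a_le_x (F : T ≃o T) (x : T) (h : x ⊓ F x ≤ F (x ⊓ F x)) (n : ℕ) :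
    x ⊓ F x ≤ (⇑F)^[n] x := by
  cases n with
  | zero => exact inf_le_left
  | succ n =>
      calc x ⊓ F x ≤ (⇑F)^[n] (x ⊓ F x) := core_a_le F x h n
        _ = (⇑F)^[n] x ⊓ (⇑F)^[n] (F x) := iter_inf F n x (F x)
        _ ≤ (⇑F)^[n] (F x) := inf_le_right
        _ = (⇑F)^[n+1] x := (Function.iterate_succ_apply (⇑F) n x).symm

/-- Core lemma: if `a = x ⊓ F x` moves strictly up under `F`, then
`x ⊓ F^[n+1] x = a` for all `n`. -/
private lemma core_eq (hsl : ∀ a b c : T, b ≤ a → c ≤ a → b ≤ c ∨ c ≤ b)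
    (F : T ≃o T) (x : T) (h : x ⊓ F x < F (x ⊓ F x)) (n : ℕ) :
    x ⊓ (⇑F)^[n+1] x = x ⊓ F x := by
  have hax : ∀ m, x ⊓ F x ≤ (⇑F)^[m] x := core_a_le_x F x h.le
  have hb : F (x ⊓ F x) ≤ (⇑F)^[n+1] x := by
    rw [Function.iterate_succ_apply']
    exact F.monotone (hax n)
  rcases hsl ((⇑F)^[n+1] x) (x ⊓ (⇑F)^[n+1] x) (F (x ⊓ F x)) inf_le_right hb with hc | hc
  · apply le_antisymm
    · exact le_inf inf_le_left (hc.trans (F.monotone inf_le_left))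
    · exact le_inf inf_le_left (hax (n+1))
  · exfalso
    have hba : F (x ⊓ F x) ≤ x ⊓ F x :=
      le_inf (hc.trans inf_le_left) (F.monotone inf_le_left)
    exact absurd (h.trans_le hba) (lt_irrefl _)

private lemma core_not_le (hsl : ∀ a b c : T, b ≤ a → c ≤ a → b ≤ c ∨ c ≤ b)
    (F : T ≃o T) (x : T) (h : x ⊓ F x < F (x ⊓ F x)) (n : ℕ) :
    ¬ ((⇑F)^[n+1] x ≤ x) := by
  intro hle
  have hax : ∀ m, x ⊓ F x ≤ (⇑F)^[m] x := core_a_le_x F x h.le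
  have h1 : (⇑F)^[n+1] x = x ⊓ F x := by
    rw [← core_eq hsl F x h n]
    exact (inf_eq_right.mpr hle).symm
  have h2 : (⇑F)^[n+1] (x ⊓ F x) = x ⊓ F x := by
    have : (⇑F)^[n+1] (x ⊓ F x) = (⇑F)^[n+1] x ⊓ (⇑F)^[n+2] x := by
      rw [iter_inf, ← Function.iterate_succ_apply]
    rw [this, h1]
    exact inf_eq_left.mpr ((le_inf inf_le_left inf_le_right).trans (hax (n+2)))
  have h3 : x ⊓ F x < (⇑F)^[n+1] (x ⊓ F x) := by
    refine h.trans_le ?_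
    rw [Function.iterate_succ_apply']
    exact F.monotone (core_a_le F x h.le n)
  exact absurd (h3.trans_eq h2) (lt_irrefl _)

private lemma core_le_of (hsl : ∀ a b c : T, b ≤ a → c ≤ a → b ≤ c ∨ c ≤ b)
    (F : T ≃o T) (x : T) (h : x ⊓ F x < F (x ⊓ F x)) (n : ℕ)
    (hle : x ≤ (⇑F)^[n+1] x) : x ≤ F x := by
  have heq := core_eq hsl F x h n
  rw [inf_eq_left.mpr hle] at heq
  exact heq.le.trans inf_le_right

/-- Iterated order isomorphism. -/
private def iterIso (f : T ≃o T) : ℕ → (T ≃o T)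
  | 0 => OrderIso.refl T
  | (n+1) => (iterIso f n).trans f

private lemma iterIso_apply (f : T ≃o T) : ∀ (n : ℕ) (x : T),
    iterIso f n x = (⇑f)^[n] x
  | 0, _ => rfl
  | (n+1), x => by
      rw [Function.iterate_succ_apply']
      show f (iterIso f n x) = _
      rw [iterIso_apply f n x]

private lemma iterIso_iterate (f : T ≃o T) (l : ℕ) : ∀ (m : ℕ) (x : T),
    (⇑(iterIso f l))^[m] x = (⇑f)^[m*l] x
  | 0, x => by simp
  | (m+1), x => by
      rw [Function.iterate_succ_apply, iterIso_apply, iterIso_iterate f l m,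
        ← Function.iterate_add_apply]
      congr 1
      ring

private lemma symm_iter_cancel (F : T ≃o T) (m : ℕ) (z : T) :
    (⇑F.symm)^[m] ((⇑F)^[m] z) = z :=
  (Function.LeftInverse.iterate F.symm_apply_apply m) z

private lemma chain_gt (f : T ≃o T) (x : T) (k : ℕ) (h : (⇑f)^[k] x < x) :
    ∀ j, (⇑f)^[(j+1)*k] x < x := by
  intro j
  induction j with
  | zero => simpa using h
  | succ j ih =>
      have h1 : (⇑f)^[k] ((⇑f)^[(j+1)*k] x) < (⇑f)^[k] x := (iter_lt_iff f k).mpr ih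
      have h2 : (⇑f)^[(j+1+1)*k] x = (⇑f)^[k] ((⇑f)^[(j+1)*k] x) := by
        rw [← Function.iterate_add_apply]
        congr 1
        ring
      rw [h2]
      exact h1.trans h

private lemma chain_lt (f : T ≃o T) (x : T) (k : ℕ) (h : x < (⇑f)^[k] x) :
    ∀ j, x < (⇑f)^[(j+1)*k] x := by
  intro j
  induction j with
  | zero => simpa using h
  | succ j ih =>
      have h1 : (⇑f)^[k] x < (⇑f)^[k] ((⇑f)^[(j+1)*k] x) := (iter_lt_iff f k).mpr ih
      have h2 : (⇑f)^[(j+1+1)*k] x = (⇑f)^[k] ((⇑f)^[(j+1)*k] x) := by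
        rw [← Function.iterate_add_apply]
        congr 1
        ring
      rw [h2]
      exact h.trans h1

private lemma chain_gt' (f : T ≃o T) (x : T) (k : ℕ) (h : (⇑f)^[k] x < x)
    (j : ℕ) (hj : 0 < j) : (⇑f)^[j*k] x < x := by
  obtain ⟨m, rfl⟩ : ∃ m, j = m + 1 := ⟨j - 1, by omega⟩
  exact chain_gt f x k h m

private lemma chain_lt' (f : T ≃o T) (x : T) (k : ℕ) (h : x < (⇑f)^[k] x)
    (j : ℕ) (hj : 0 < j) : x < (⇑f)^[j*k] x := by
  obtain ⟨m, rfl⟩ : ∃ m, j = m + 1 := ⟨j - 1, by omega⟩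
  exact chain_lt f x k h m

/-- Divisibility: the set of indices where the orbit is comparable with the base
point consists of multiples of `k`. -/
private lemma dvd_lemma (hsl : ∀ a b c : T, b ≤ a → c ≤ a → b ≤ c ∨ c ≤ b)
    (f : T ≃o T) (x : T) (k : ℕ) (hk : 0 < k)
    (hnc : ∀ m : ℕ, 0 < m → (⇑f)^[m] x ≠ x)
    (hmin : ∀ m : ℕ, 0 < m → m < k → ¬((⇑f)^[m] x < x ∨ x < (⇑f)^[m] x)) :
    ∀ l : ℕ, 0 < l → ((⇑f)^[l] x < x ∨ x < (⇑f)^[l] x) →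
      ((⇑f)^[k] x < x ∨ x < (⇑f)^[k] x) → k ∣ l := by
  intro l
  induction l using Nat.strong_induction_on with
  | _ l ih =>
    intro hl hC hK
    rcases lt_trichotomy l k with h | h | h
    · exact absurd hC (hmin l hl h)
    · exact h ▸ dvd_refl k
    · have hlk : 0 < l - k := by omega
      have hfk : (⇑f)^[k] ((⇑f)^[l-k] x) = (⇑f)^[l] x := by
        rw [← Function.iterate_add_apply]
        congr 1
        omega
      have hne : (⇑f)^[l-k] x ≠ x := hnc _ hlk
      have hD : (⇑f)^[l-k] x < x ∨ x < (⇑f)^[l-k] x := by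
        rcases hC with hC | hC <;> rcases hK with hK | hK
        · rcases hsl x _ _ hC.le hK.le with h1 | h1
          · left
            have h2 : (⇑f)^[k] ((⇑f)^[l-k] x) ≤ (⇑f)^[k] x := by rw [hfk]; exact h1
            exact lt_of_le_of_ne ((iter_le_iff f k).mp h2) hne
          · right
            have h2 : (⇑f)^[k] x ≤ (⇑f)^[k] ((⇑f)^[l-k] x) := by rw [hfk]; exact h1
            exact lt_of_le_of_ne ((iter_le_iff f k).mp h2) hne.symm
        · left
          have h2 : (⇑f)^[k] ((⇑f)^[l-k] x) ≤ (⇑f)^[k] x := by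
            rw [hfk]; exact (hC.trans hK).le
          exact lt_of_le_of_ne ((iter_le_iff f k).mp h2) hne
        · right
          have h2 : (⇑f)^[k] x ≤ (⇑f)^[k] ((⇑f)^[l-k] x) := by
            rw [hfk]; exact (hK.trans hC).le
          exact lt_of_le_of_ne ((iter_le_iff f k).mp h2) hne.symm
        · have h2 : (⇑f)^[l-k] x ≤ (⇑f)^[l] x := by
            have h3 : (⇑f)^[l] x = (⇑f)^[l-k] ((⇑f)^[k] x) := by
              rw [← Function.iterate_add_apply]
              congr 1
              omega
            rw [h3]
            exact (iter_le_iff f (l-k)).mpr hK.le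
          rcases hsl ((⇑f)^[l] x) _ _ h2 hC.le with h1 | h1
          · exact Or.inl (lt_of_le_of_ne h1 hne)
          · exact Or.inr (lt_of_le_of_ne h1 hne.symm)
      have hd := ih (l-k) (by omega) hlk hD hK
      have : k ∣ (l - k) + k := Dvd.dvd.add hd (dvd_refl k)
      rwa [Nat.sub_add_cancel h.le] at this

end Aux

/-- Let `η` be the orbit of `η₀` under an automorphism `f` of a meet-tree, a
(non-cyclic) `k`-spiral.  For any `l > 0`, if `η 0 ⊓ η l ≠ η l ⊓ η (2l)`, then `k`
divides `l`, and hence `η 0 < η l < η (2l)` or `η 0 > η l > η (2l)`. -/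
theorem spiral_meet_neq_implies_dvd {T : Type*} [SemilatticeInf T]
    (hsl : ∀ a b c : T, b ≤ a → c ≤ a → b ≤ c ∨ c ≤ b)
    (f : T ≃o T) (η₀ : T) (η : ℕ → T) (hη : ∀ i, η i = (⇑f)^[i] η₀)
    (k : ℕ) (hk : 0 < k)
    (hnc : ∀ m : ℕ, 0 < m → η m ≠ η 0)
    (hsp : η k < η 0 ∨ η 0 < η k)
    (hmin : ∀ m : ℕ, 0 < m → m < k → ¬(η m < η 0 ∨ η 0 < η m)) :
    ∀ l : ℕ, 0 < l → η 0 ⊓ η l ≠ η l ⊓ η (2 * l) →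
      k ∣ l ∧ ((η 0 < η l ∧ η l < η (2 * l)) ∨ (η (2 * l) < η l ∧ η l < η 0)) := by
  simp only [hη, Function.iterate_zero, id_eq] at hnc hsp hmin ⊢
  intro l hl hne
  set x := η₀ with hx
  set F := iterIso f l with hFdef
  have hFx : ∀ z : T, F z = (⇑f)^[l] z := fun z => iterIso_apply f l z
  have hFb : F (x ⊓ F x) = (⇑f)^[l] x ⊓ (⇑f)^[2*l] x := by
    have h1 : F (x ⊓ F x) = (⇑f)^[l] (x ⊓ (⇑f)^[l] x) := by rw [hFx, hFx]
    rw [h1, iter_inf, ← Function.iterate_add_apply, show l + l = 2*l by ring]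
  have haFx : x ⊓ F x = x ⊓ (⇑f)^[l] x := by rw [hFx]
  have hcomp := hsl ((⇑f)^[l] x) (x ⊓ (⇑f)^[l] x) ((⇑f)^[l] x ⊓ (⇑f)^[2*l] x)
    inf_le_right inf_le_left
  have hFkx : (⇑F)^[k] x = (⇑f)^[k*l] x := iterIso_iterate f l k x
  have hkk : k - 1 + 1 = k := by omega
  rcases hcomp with hab | hba
  · -- ascending case for F at x
    have hab' : x ⊓ (⇑f)^[l] x < (⇑f)^[l] x ⊓ (⇑f)^[2*l] x := lt_of_le_of_ne hab hne
    have h : x ⊓ F x < F (x ⊓ F x) := by rw [hFb, haFx]; exact hab'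
    rcases hsp with hdesc | hasc
    · exfalso
      have hch : (⇑f)^[k*l] x < x := by
        rw [mul_comm]
        exact chain_gt' f x k hdesc l hl
      exact core_not_le hsl F x h (k-1) (by rw [hkk, hFkx]; exact hch.le)
    · have hlt : x ≤ (⇑F)^[k] x := by
        rw [hFkx, mul_comm]
        exact (chain_lt' f x k hasc l hl).le
      have hxle : x ≤ F x := core_le_of hsl F x h (k-1) (by rw [hkk]; exact hlt)
      have hxlt : x < (⇑f)^[l] x :=
        lt_of_le_of_ne (by rw [← hFx]; exact hxle) (Ne.symm (hnc l hl))
      refine ⟨dvd_lemma hsl f x k hk hnc hmin l hl (Or.inr hxlt) (Or.inr hasc),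
        Or.inl ⟨hxlt, ?_⟩⟩
      have h2 := (iter_lt_iff f l).mpr hxlt
      rwa [← Function.iterate_add_apply, show l + l = 2*l by ring] at h2
  · -- descending case: work with G = F.symm at y = f^[l] x
    have hba' : (⇑f)^[l] x ⊓ (⇑f)^[2*l] x < x ⊓ (⇑f)^[l] x := lt_of_le_of_ne hba (Ne.symm hne)
    set y := (⇑f)^[l] x with hy
    have hGy : F.symm y = x := by
      rw [hy, ← hFx]
      exact F.symm_apply_apply x
    have hyGy : y ⊓ F.symm y = x ⊓ (⇑f)^[l] x := by rw [hGy, inf_comm]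
    have hcond : y ⊓ F.symm y < F.symm (y ⊓ F.symm y) := by
      rw [hyGy]
      have h1 := F.symm.strictMono hba'
      rw [← hFb, F.symm_apply_apply, haFx] at h1
      exact h1
    rcases hsp with hdesc | hasc
    · -- η k < η 0 : conclude η l < η 0
      have h1 : (⇑F)^[k] y < y := by
        have hch : (⇑f)^[l*k] x < x := chain_gt' f x k hdesc l hl
        have h2 := (iter_lt_iff f l).mpr hch
        rw [← Function.iterate_add_apply] at h2
        rw [iterIso_iterate, hy, ← Function.iterate_add_apply,
          show k*l + l = l + l*k by ring]
        exact h2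
      have h2 : y < (⇑F.symm)^[k] y := by
        have h3 := (iter_lt_iff F.symm k).mpr h1
        rwa [symm_iter_cancel] at h3
      have hyle : y ≤ F.symm y := core_le_of hsl F.symm y hcond (k-1) (by rw [hkk]; exact h2.le)
      have hxlt : (⇑f)^[l] x < x := by
        rw [hGy] at hyle
        exact lt_of_le_of_ne hyle (hnc l hl)
      refine ⟨dvd_lemma hsl f x k hk hnc hmin l hl (Or.inl hxlt) (Or.inl hdesc),
        Or.inr ⟨?_, hxlt⟩⟩
      have h4 := (iter_lt_iff f l).mpr hxlt
      rwa [← Function.iterate_add_apply, show l + l = 2*l by ring] at h4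
    · exfalso
      have h1 : y < (⇑F)^[k] y := by
        have hch : x < (⇑f)^[l*k] x := chain_lt' f x k hasc l hl
        have h2 := (iter_lt_iff f l).mpr hch
        rw [← Function.iterate_add_apply] at h2
        rw [iterIso_iterate, hy, ← Function.iterate_add_apply,
          show k*l + l = l + l*k by ring]
        exact h2
      have h3 := (iter_lt_iff F.symm k).mpr h1
      rw [symm_iter_cancel] at h3
      exact core_not_le hsl F.symm y hcond (k-1) (by rw [hkk]; exact h3.le)
end

section
/- Let f be an automorphism of a meet-tree T, η₀ ∈ T, η_i = f^i(η₀), and k ≥ 1. Suppose η₀ ∧ η_k < η_k ∧ η_{2k}. Then for any i₁ < i₂ and j₁ < j₂ with i₁ ≡ i₂ ≡ j₁ ≡ j₂ (mod k): (a) η_{i₁} ∧ η_{i₂} = η_{i₁} ∧ η_{i₁+k}; and (b) η_{i₁} ∧ η_{i₂} < η_{j₁} ∧ η_{j₂} if and only if i₁ < j₁, and η_{i₁} ∧ η_{i₂} = η_{j₁} ∧ η_{j₂} if and only if i₁ = j₁. -/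
/-- Let `f` be an automorphism of a meet-tree, `η i = f^[i] η₀`, `k ≥ 1`, and suppose
`η 0 ⊓ η k < η k ⊓ η (2k)`.  Then for `i₁ < i₂` and `j₁ < j₂` all congruent mod `k`:
(a) `η i₁ ⊓ η i₂ = η i₁ ⊓ η (i₁ + k)`; and
(b) `η i₁ ⊓ η i₂ < η j₁ ⊓ η j₂ ↔ i₁ < j₁` and `η i₁ ⊓ η i₂ = η j₁ ⊓ η j₂ ↔ i₁ = j₁`. -/
theorem ascending_comb_meets {T : Type*} [SemilatticeInf T]
    (hsl : ∀ a b c : T, b ≤ a → c ≤ a → b ≤ c ∨ c ≤ b)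
    (f : T ≃o T) (η₀ : T) (η : ℕ → T) (hη : ∀ i, η i = (⇑f)^[i] η₀)
    (k : ℕ) (hk : 1 ≤ k) (h : η 0 ⊓ η k < η k ⊓ η (2 * k)) :
    ∀ i₁ i₂ j₁ j₂ : ℕ, i₁ < i₂ → j₁ < j₂ →
      i₁ % k = i₂ % k → i₂ % k = j₁ % k → j₁ % k = j₂ % k →
      (η i₁ ⊓ η i₂ = η i₁ ⊓ η (i₁ + k)) ∧
      (η i₁ ⊓ η i₂ < η j₁ ⊓ η j₂ ↔ i₁ < j₁) ∧
      (η i₁ ⊓ η i₂ = η j₁ ⊓ η j₂ ↔ i₁ = j₁) := by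
  -- `f^[n]` preserves infima
  have hfinf : ∀ (n : ℕ) (x y : T), (⇑f)^[n] (x ⊓ y) = (⇑f)^[n] x ⊓ (⇑f)^[n] y := by
    intro n
    induction n with
    | zero => intro x y; simp
    | succ n ih =>
      intro x y
      rw [Function.iterate_succ_apply', Function.iterate_succ_apply',
        Function.iterate_succ_apply', ih, f.map_inf]
  -- `f^[n]` is strictly monotone
  have hfsm : ∀ (n : ℕ) {x y : T}, x < y → (⇑f)^[n] x < (⇑f)^[n] y := by
    intro n
    induction n with
    | zero => intro x y hxy; simpa using hxy
    | succ n ih =>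
      intro x y hxy
      rw [Function.iterate_succ_apply', Function.iterate_succ_apply']
      exact f.strictMono (ih hxy)
  set a : ℕ → T := fun i => η i ⊓ η (i + k) with ha
  have ha_left : ∀ i, a i ≤ η i := by intro i; simp only [ha]; exact inf_le_left
  have ha_right : ∀ i, a i ≤ η (i + k) := by intro i; simp only [ha]; exact inf_le_right
  have ha_ge : ∀ (x : T) (i : ℕ), x ≤ η i → x ≤ η (i + k) → x ≤ a i := by
    intro x i h1 h2; simp only [ha]; exact le_inf h1 h2
  have hshift : ∀ i j, a (i + j) = (⇑f)^[j] (a i) := by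
    intro i j
    have h1 : η (i + j) = (⇑f)^[j] (η i) := by
      rw [hη, hη, ← Function.iterate_add_apply]; congr 1; omega
    have h2 : η (i + j + k) = (⇑f)^[j] (η (i + k)) := by
      rw [hη, hη, ← Function.iterate_add_apply]; congr 1; omega
    simp only [ha, h1, h2, hfinf]
  have hak : a 0 < a k := by
    simp only [ha, zero_add]
    rw [show k + k = 2 * k by ring]
    exact h
  have hstep : ∀ i, a i < a (i + k) := by
    intro i
    have h1 := hfsm i hak
    rw [← hshift 0 i, ← hshift k i] at h1
    rw [zero_add] at h1
    rwa [show k + i = i + k by omega] at h1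
  have hmono : ∀ n, 1 ≤ n → ∀ i, a i < a (i + n * k) := by
    intro n
    induction n with
    | zero => omega
    | succ n ih =>
      intro _ i
      by_cases hn0 : n = 0
      · subst hn0; simpa using hstep i
      · have h1 := ih (by omega) i
        have h2 := hstep (i + n * k)
        rw [show i + n * k + k = i + (n + 1) * k by ring] at h2
        exact h1.trans h2
  -- main lemma: the meet `η i ⊓ η (i + n*k)` equals `a i`
  have hmain : ∀ n, 1 ≤ n → ∀ i, η i ⊓ η (i + n * k) = a i := by
    intro n
    induction n with
    | zero => omega
    | succ n ih =>
      intro _ i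
      by_cases hn0 : n = 0
      · subst hn0; norm_num [ha]
      · have hn1 : 1 ≤ n := by omega
        have ihk := ih hn1 (i + k)
        have hidx : i + (n + 1) * k = (i + k) + n * k := by ring
        rw [hidx]
        have hale : a (i + k) ≤ η ((i + k) + n * k) := ihk ▸ inf_le_right
        rcases hsl (η ((i + k) + n * k)) (η i ⊓ η ((i + k) + n * k)) (a (i + k))
            inf_le_right hale with hc | hc
        · -- the meet lies below `a (i+k)`, hence below `η (i+k)`
          apply le_antisymm
          · exact ha_ge _ _ inf_le_left (hc.trans (ha_left (i + k)))
          · exact le_inf (ha_left i) (((hstep i).le.trans hale))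
        · -- impossible: `a (i+k) ≤ η i` would force `a (i+k) ≤ a i < a (i+k)`
          exfalso
          have : a (i + k) ≤ a i :=
            ha_ge _ _ (hc.trans inf_le_left) (ha_left (i + k))
          exact absurd this (hstep i).not_ge
  -- comparison along a residue class
  have hrep : ∀ i j : ℕ, i < j → i % k = j % k → ∃ n, 1 ≤ n ∧ j = i + n * k := by
    intro i j hij hmod
    have hd : k ∣ (j - i) :=
      Nat.dvd_of_mod_eq_zero (Nat.sub_mod_eq_zero_of_mod_eq hmod.symm)
    obtain ⟨n, hn⟩ := hd
    rw [Nat.mul_comm] at hn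
    refine ⟨n, ?_, by omega⟩
    rcases Nat.eq_zero_or_pos n with h0 | h0
    · exfalso; subst h0; simp at hn; omega
    · exact h0
  have hcmp : ∀ i j : ℕ, i % k = j % k → (a i < a j ↔ i < j) := by
    intro i j hmod
    constructor
    · intro hlt
      by_contra hle
      push_neg at hle
      rcases Nat.lt_or_ge j i with hji | hji
      · obtain ⟨n, hn1, hn2⟩ := hrep j i hji hmod.symm
        subst hn2
        exact absurd (hmono n hn1 j) (lt_asymm hlt)
      · have : i = j := le_antisymm hji hle
        subst this
        exact lt_irrefl _ hlt
    · intro hij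
      obtain ⟨n, hn1, hn2⟩ := hrep i j hij hmod
      subst hn2
      exact hmono n hn1 i
  intro i₁ i₂ j₁ j₂ hi hj hm1 hm2 hm3
  obtain ⟨n, hn1, hn2⟩ := hrep i₁ i₂ hi hm1
  obtain ⟨m, hm1', hm2'⟩ := hrep j₁ j₂ hj hm3
  have e1 : η i₁ ⊓ η i₂ = a i₁ := by rw [hn2]; exact hmain n hn1 i₁
  have e2 : η j₁ ⊓ η j₂ = a j₁ := by rw [hm2']; exact hmain m hm1' j₁
  have hmodij : i₁ % k = j₁ % k := hm1.trans hm2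
  refine ⟨?_, ?_, ?_⟩
  · rw [e1]
  · rw [e1, e2]; exact hcmp i₁ j₁ hmodij
  · rw [e1, e2]
    constructor
    · intro heq
      rcases Nat.lt_trichotomy i₁ j₁ with hlt | heq' | hgt
      · exact absurd ((hcmp i₁ j₁ hmodij).mpr hlt) (by rw [heq]; exact lt_irrefl _)
      · exact heq'
      · exact absurd ((hcmp j₁ i₁ hmodij.symm).mpr hgt) (by rw [heq]; exact lt_irrefl _)
    · intro heq; rw [heq]
end

section
/- Let f be an automorphism of a meet-tree T, η₀ ∈ T, η_i = f^i(η₀), n > 0, and let u be the pseudo-period of the orbit segment (η₀, …, η_n): the smallest u > 0 such that η₀ ∧ η_u = max_{0 < i ≤ n} η₀ ∧ η_i. Then u is also the pseudo-period of the time-reversed segment: u is the smallest m₀ > 0 such that η_{n-m₀} ∧ η_n = max_{0 < m ≤ n} η_n ∧ η_{n-m}. -/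
/-- The pseudo-period is invariant under time reversal: if `u` is the smallest positive
index with `η 0 ⊓ η u = max_{0 < i ≤ n} η 0 ⊓ η i`, then `u` is also the smallest
positive `m₀` with `η (n - m₀) ⊓ η n = max_{0 < m ≤ n} η n ⊓ η (n - m)`. -/
theorem pseudo_period_time_reversal {T : Type*} [SemilatticeInf T]
    (hsl : ∀ a b c : T, b ≤ a → c ≤ a → b ≤ c ∨ c ≤ b)
    (f : T ≃o T) (η₀ : T) (η : ℕ → T) (hη : ∀ i, η i = (⇑f)^[i] η₀)
    (n u : ℕ) (hn : 0 < n) (hu : 0 < u) (hun : u ≤ n)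
    (hmax : ∀ i : ℕ, 0 < i → i ≤ n → η 0 ⊓ η i ≤ η 0 ⊓ η u)
    (hmin : ∀ m : ℕ, 0 < m → m < u → η 0 ⊓ η m < η 0 ⊓ η u) :
    (∀ m : ℕ, 0 < m → m ≤ n → η n ⊓ η (n - m) ≤ η n ⊓ η (n - u)) ∧
    (∀ m : ℕ, 0 < m → m < u → η n ⊓ η (n - m) < η n ⊓ η (n - u)) := by
  have hle : ∀ (j : ℕ) (a b : T), (⇑f)^[j] a ≤ (⇑f)^[j] b ↔ a ≤ b := by
    intro j
    induction j with
    | zero => simp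
    | succ j ih =>
      intro a b
      rw [Function.iterate_succ_apply', Function.iterate_succ_apply', f.le_iff_le]
      exact ih a b
  have hltiff : ∀ (j : ℕ) (a b : T), (⇑f)^[j] a < (⇑f)^[j] b ↔ a < b := by
    intro j a b
    simp [lt_iff_le_not_ge, hle]
  have hinf : ∀ (j : ℕ) (a b : T), (⇑f)^[j] (a ⊓ b) = (⇑f)^[j] a ⊓ (⇑f)^[j] b := by
    intro j a b
    induction j with
    | zero => simp
    | succ j ih =>
      rw [Function.iterate_succ_apply', Function.iterate_succ_apply',
        Function.iterate_succ_apply', ih, OrderIso.map_inf]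
  have hsh : ∀ j i : ℕ, η (j + i) = (⇑f)^[j] (η i) := by
    intro j i
    rw [hη, hη, Function.iterate_add_apply]
  have hsh0 : ∀ j : ℕ, η j = (⇑f)^[j] (η 0) := by
    intro j; simpa using hsh j 0
  have As : ∀ j i : ℕ, 0 < i → i < u → η j ⊓ η (j + i) < η j ⊓ η (j + u) := by
    intro j i h1 h2
    have h := hmin i h1 h2
    have h' := (hltiff j _ _).2 h
    rwa [hinf, hinf, ← hsh0, ← hsh, ← hsh] at h'
  have key1 : ∀ b : ℕ, 0 < b → b < u → η u ⊓ η b < η 0 ⊓ η u := by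
    intro b hb hbu
    have hnc : ¬ (η 0 ⊓ η u ≤ η b) := fun h =>
      absurd ((le_inf inf_le_left h).trans_lt (hmin b hb hbu)) (lt_irrefl _)
    rcases hsl (η u) (η u ⊓ η b) (η 0 ⊓ η u) inf_le_left inf_le_right with h | h
    · exact lt_of_le_of_ne h fun he => hnc (he ▸ inf_le_right)
    · exact absurd (h.trans inf_le_right) hnc
  have key2 : ∀ k : ℕ, 0 < k → k + u ≤ n → η 0 ⊓ η (k + u) ≤ η k ⊓ η (k + u) := by
    intro k hk hkn
    by_contra hcon
    have hlt1 : η k ⊓ η (k + u) < η 0 ⊓ η (k + u) := by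
      rcases hsl (η (k + u)) (η 0 ⊓ η (k + u)) (η k ⊓ η (k + u)) inf_le_right inf_le_right
        with h | h
      · exact absurd h hcon
      · exact lt_of_le_of_ne h fun he => hcon he.ge
    have hmle : η 0 ⊓ η (k + u) ≤ η 0 ⊓ η u := hmax (k + u) (by omega) hkn
    have hflt : η k ⊓ η (k + u) < η 0 ⊓ η u := hlt1.trans_le hmle
    rcases lt_or_ge k u with hku | huk
    · have h5 : η k ⊓ η (k + u) ≤ η k ⊓ η u :=
        le_inf inf_le_left (hflt.le.trans inf_le_right)
      have h6 : η k ⊓ η (k + (u - k)) < η k ⊓ η (k + u) := As k (u - k) (by omega) (by omega)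
      rw [show k + (u - k) = u from by omega] at h6
      exact absurd (h5.trans_lt h6) (lt_irrefl _)
    · -- k ≥ u
      have s2 : η k ⊓ η (k + u) ≤ η 0 := hflt.le.trans inf_le_left
      have s5a : η k ⊓ η (k + u) ≤ η 0 ⊓ η k := le_inf s2 inf_le_left
      have s4 : η 0 ⊓ η k ≤ η 0 ⊓ η (k + u) := by
        rcases hsl (η 0) (η 0 ⊓ η k) (η 0 ⊓ η (k + u)) inf_le_left inf_le_left with h | h
        · exact h
        · exact absurd ((le_inf (h.trans inf_le_right) inf_le_right).trans_lt hlt1)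
            (lt_irrefl _)
      have seq : η k ⊓ η (k + u) = η 0 ⊓ η k :=
        le_antisymm s5a (le_inf inf_le_right (s4.trans inf_le_right))
      have e1 : η k ⊓ η (k + u) = (⇑f)^[u] (η (k - u) ⊓ η k) := by
        rw [hinf, ← hsh, ← hsh, show u + (k - u) = k from by omega,
          show u + k = k + u from by omega]
      have s6a : η k ⊓ η (k + u) ≤ η u := hflt.le.trans inf_le_right
      have s6 : η (k - u) ⊓ η k ≤ η 0 := by
        rw [e1, hsh0 u] at s6a
        exact (hle u _ _).1 s6a
      have s6' : η (k - u) ⊓ η k ≤ (⇑f)^[u] (η (k - u) ⊓ η k) := by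
        rw [← e1]
        exact (le_inf s6 inf_le_right).trans seq.ge
      have e3 : η (k - u) ⊓ η k = (⇑f)^[k - u] (η 0 ⊓ η u) := by
        rw [hinf, ← hsh, ← hsh, Nat.add_zero, show k - u + u = k from by omega]
      have hcfu : η 0 ⊓ η u ≤ (⇑f)^[u] (η 0 ⊓ η u) := by
        have h := s6'
        rw [e3, ← Function.iterate_add_apply, show u + (k - u) = (k - u) + u from by omega,
          Function.iterate_add_apply] at h
        exact (hle (k - u) _ _).1 h
      have chain : ∀ t : ℕ, η 0 ⊓ η u ≤ (⇑f)^[t * u] (η 0 ⊓ η u) := by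
        intro t
        induction t with
        | zero => simp
        | succ t ih =>
          have h2 : (⇑f)^[t * u] (η 0 ⊓ η u) ≤ (⇑f)^[t * u] ((⇑f)^[u] (η 0 ⊓ η u)) :=
            (hle _ _ _).2 hcfu
          rw [← Function.iterate_add_apply, show t * u + u = (t + 1) * u from by ring] at h2
          exact ih.trans h2
      have hfr : (⇑f)^[k % u] (η 0 ⊓ η u) ≤ (⇑f)^[k] (η 0 ⊓ η u) := by
        have h := (hle (k % u) _ _).2 (chain (k / u))
        rwa [← Function.iterate_add_apply, Nat.mod_add_div' k u] at h
      have e4 : (⇑f)^[k] (η 0 ⊓ η u) = η k ⊓ η (k + u) := by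
        rw [hinf, ← hsh0, ← hsh]
      have hfrlt : (⇑f)^[k % u] (η 0 ⊓ η u) < η 0 ⊓ η u :=
        (hfr.trans_eq e4).trans_lt hflt
      rcases Nat.eq_zero_or_pos (k % u) with hr0 | hrpos
      · rw [hr0] at hfrlt
        simp at hfrlt
      · have hru : k % u < u := Nat.mod_lt _ hu
        have e5 : (⇑f)^[k % u] (η 0 ⊓ η u) = η (k % u) ⊓ η (k % u + u) := by
          rw [hinf, ← hsh0, ← hsh]
        rw [e5] at hfrlt
        have h7 : η (k % u) ⊓ η (k % u + u) ≤ η (k % u) ⊓ η u :=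
          le_inf inf_le_left (hfrlt.le.trans inf_le_right)
        have h8 : η (k % u) ⊓ η (k % u + (u - k % u)) < η (k % u) ⊓ η (k % u + u) :=
          As _ _ (by omega) (by omega)
        rw [show k % u + (u - k % u) = u from by omega] at h8
        exact absurd (h7.trans_lt h8) (lt_irrefl _)
  have strictlem : ∀ m : ℕ, 0 < m → m < u → η n ⊓ η (n - m) < η n ⊓ η (n - u) := by
    intro m hm hmu
    have e1 : η n ⊓ η (n - m) = (⇑f)^[n - u] (η u ⊓ η (u - m)) := by
      rw [hinf, ← hsh, ← hsh, show n - u + u = n from by omega,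
        show n - u + (u - m) = n - m from by omega]
    have e2 : η n ⊓ η (n - u) = (⇑f)^[n - u] (η u ⊓ η 0) := by
      rw [hinf, ← hsh, ← hsh, show n - u + u = n from by omega, Nat.add_zero]
    rw [e1, e2, hltiff]
    have h := key1 (u - m) (by omega) (by omega)
    rwa [inf_comm (η 0) (η u)] at h
  refine ⟨fun m hm hmn => ?_, strictlem⟩
  rcases lt_trichotomy m u with h | h | h
  · exact (strictlem m hm h).le
  · rw [h]
  · have e1 : η n ⊓ η (n - m) = (⇑f)^[n - m] (η m ⊓ η 0) := by
      rw [hinf, ← hsh, ← hsh, show n - m + m = n from by omega, Nat.add_zero]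
    have e2 : η n ⊓ η (n - u) = (⇑f)^[n - m] (η m ⊓ η (m - u)) := by
      rw [hinf, ← hsh, ← hsh, show n - m + m = n from by omega,
        show n - m + (m - u) = n - u from by omega]
    rw [e1, e2, hle]
    have hk2 := key2 (m - u) (by omega) (by omega)
    rw [show m - u + u = m from by omega] at hk2
    have h0 : η m ⊓ η 0 ≤ η 0 ⊓ η m := le_inf inf_le_right inf_le_left
    exact le_inf inf_le_left ((h0.trans hk2).trans inf_le_left)
end

section
/- Let f be an automorphism of a meet-tree T, η₀ ∈ T, η_i = f^i(η₀). Suppose (η₀, …, η_n) is a quasi-cycle with pseudo-period u, and suppose moreover that η₀ ∧ η_u is a fixed point of f^u. Then for every positive m ≤ n: η₀ ∧ η_m = η₀ ∧ η_u if and only if u divides m. -/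
/-- Let `(η 0, …, η n)` be a quasi-cyclic orbit segment of an automorphism `f` of a
meet-tree, with pseudo-period `u`, and suppose `η 0 ⊓ η u` is a fixed point of `f^[u]`.
Then for positive `m ≤ n`: `η 0 ⊓ η m = η 0 ⊓ η u` iff `u ∣ m`. -/
theorem quasi_cycle_meet_eq_iff_dvd {T : Type*} [SemilatticeInf T]
    (hsl : ∀ a b c : T, b ≤ a → c ≤ a → b ≤ c ∨ c ≤ b)
    (f : T ≃o T) (η₀ : T) (η : ℕ → T) (hη : ∀ i, η i = (⇑f)^[i] η₀)
    (n u : ℕ) (hn : 0 < n) (hu : 0 < u) (hun : u ≤ n)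
    (hq1 : ∀ i : ℕ, 0 < i → i ≤ n → ¬ η i ≤ η 0 ∧ ¬ η 0 ≤ η i)
    (hq2 : ∀ k : ℕ, 2 * k ≤ n → η 0 ⊓ η k = η k ⊓ η (2 * k))
    (hmax : ∀ i : ℕ, 0 < i → i ≤ n → η 0 ⊓ η i ≤ η 0 ⊓ η u)
    (hmin : ∀ m : ℕ, 0 < m → m < u → η 0 ⊓ η m < η 0 ⊓ η u)
    (hfix : (⇑f)^[u] (η 0 ⊓ η u) = η 0 ⊓ η u) :
    ∀ m : ℕ, 0 < m → m ≤ n → (η 0 ⊓ η m = η 0 ⊓ η u ↔ u ∣ m) := by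
  set ν := η 0 ⊓ η u with hν
  have hshift : ∀ i k : ℕ, (⇑f)^[k] (η i) = η (i + k) := by
    intro i k
    rw [hη, hη, add_comm, Function.iterate_add_apply]
  have hmono : ∀ k : ℕ, Monotone ((⇑f)^[k]) := fun k => f.monotone.iterate k
  have hsymmono : ∀ k : ℕ, Monotone ((⇑f.symm)^[k]) := fun k => f.symm.monotone.iterate k
  have hli : Function.LeftInverse ⇑f.symm ⇑f := f.symm_apply_apply
  have hlik : ∀ k : ℕ, Function.LeftInverse ((⇑f.symm)^[k]) ((⇑f)^[k]) :=
    fun k => hli.iterate k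
  -- iterated fixed point
  have hfixk : ∀ k : ℕ, (⇑f)^[u * k] ν = ν := by
    intro k
    induction k with
    | zero => simp
    | succ k ih =>
      have : u * (k + 1) = u * k + u := by ring
      rw [this, Function.iterate_add_apply, hfix, ih]
  have hνη0 : ν ≤ η 0 := inf_le_left
  have hνηuk : ∀ q : ℕ, 1 ≤ q → ν ≤ η (u * q) := by
    intro q hq
    have h1 : ν = (⇑f)^[u * (q - 1)] ν := (hfixk (q - 1)).symm
    have h2 : (⇑f)^[u * (q - 1)] ν ≤ (⇑f)^[u * (q - 1)] (η u) :=
      hmono _ inf_le_right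
    rw [hshift u (u * (q - 1))] at h2
    have he : u + u * (q - 1) = u * q := by
      have : q - 1 + 1 = q := Nat.succ_pred_eq_of_pos hq
      nlinarith [this]
    rw [he] at h2
    exact h1 ▸ h2
  have hdvd : ∀ q : ℕ, 1 ≤ q → u * q ≤ n → η 0 ⊓ η (u * q) = ν := by
    intro q hq hle
    refine le_antisymm (hmax _ (by positivity) hle) (le_inf hνη0 (hνηuk q hq))
  intro m hm hmn
  constructor
  · intro heq
    rcases Nat.eq_zero_or_pos (m % u) with hr | hr
    · exact Nat.dvd_of_mod_eq_zero hr
    exfalso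
    set q := m / u with hqdef
    set r := m % u with hrdef
    have hmdecomp : u * q + r = m := Nat.div_add_mod m u
    have hrlt : r < u := Nat.mod_lt m hu
    have hq1' : 1 ≤ q := by
      rcases Nat.eq_zero_or_pos q with h0 | h
      · exfalso
        rw [h0, Nat.mul_zero, Nat.zero_add] at hmdecomp
        have hmr : m = r := hmdecomp.symm
        exact absurd heq (ne_of_lt (hmr ▸ hmin m hm (hmr ▸ hrlt)))
      · exact h
    have hquq : u * q ≤ n := le_trans (by omega) hmn
    -- ν ≤ η m and ν ≤ η (u*q)
    have h1 : ν ≤ η m := heq ▸ inf_le_right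
    have h2 : ν ≤ η (u * q) := hνηuk q hq1'
    -- pull back by f.symm^[u*q]
    have hfsymfix : (⇑f.symm)^[u * q] ν = ν := by
      conv_lhs => rw [← hfixk q]
      exact hlik (u * q) ν
    have h1' : ν ≤ η r := by
      have := hsymmono (u * q) h1
      rw [hfsymfix] at this
      have hηm : η m = (⇑f)^[u * q] (η r) := by
        rw [hshift r (u * q)]
        congr 1
        omega
      rwa [hηm, hlik (u * q)] at this
    have h2' : ν ≤ η 0 := hνη0
    have hcon : ν ≤ η 0 ⊓ η r := le_inf h2' h1'
    exact absurd hcon (not_le_of_gt (hmin r hr hrlt))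
  · rintro ⟨q, rfl⟩
    have hq1' : 1 ≤ q := by
      rcases Nat.eq_zero_or_pos q with h0 | h
      · simp [h0] at hm
      · exact h
    exact hdvd q hq1' hmn
end

section
/- Let f be an automorphism of a meet-tree T, η₀ ∈ T, η_i = f^i(η₀). Suppose (η₀, …, η_n) is a quasi-cycle with pseudo-period u, and that η₀ ∧ η_u is fixed by f^u. Then for all i, j, k ∈ {0, …, n} with i ≡ j (mod u) and k ≠ i, k ≠ j, one has η_i ∧ η_k = η_j ∧ η_k. -/
/-- Let `(η 0, …, η n)` be a quasi-cyclic orbit segment of an automorphism `f` of a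
meet-tree, with pseudo-period `u`, and suppose `η 0 ⊓ η u` is fixed by `f^[u]`.  Then
for all `i, j, k ≤ n` with `i ≡ j (mod u)` and `k ≠ i`, `k ≠ j`:
`η i ⊓ η k = η j ⊓ η k`. -/
theorem quasi_cycle_meet_invariance {T : Type*} [SemilatticeInf T]
    (hsl : ∀ a b c : T, b ≤ a → c ≤ a → b ≤ c ∨ c ≤ b)
    (f : T ≃o T) (η₀ : T) (η : ℕ → T) (hη : ∀ i, η i = (⇑f)^[i] η₀)
    (n u : ℕ) (hn : 0 < n) (hu : 0 < u) (hun : u ≤ n)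
    (hq1 : ∀ i : ℕ, 0 < i → i ≤ n → ¬ η i ≤ η 0 ∧ ¬ η 0 ≤ η i)
    (hq2 : ∀ k : ℕ, 2 * k ≤ n → η 0 ⊓ η k = η k ⊓ η (2 * k))
    (hmax : ∀ i : ℕ, 0 < i → i ≤ n → η 0 ⊓ η i ≤ η 0 ⊓ η u)
    (hmin : ∀ m : ℕ, 0 < m → m < u → η 0 ⊓ η m < η 0 ⊓ η u)
    (hfix : (⇑f)^[u] (η 0 ⊓ η u) = η 0 ⊓ η u) :
    ∀ i j k : ℕ, i ≤ n → j ≤ n → k ≤ n → i % u = j % u → k ≠ i → k ≠ j →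
      η i ⊓ η k = η j ⊓ η k := by
  have hηs : ∀ a m : ℕ, η (a + m) = (⇑f)^[a] (η m) := by
    intro a m; rw [hη, hη, ← Function.iterate_add_apply]
  have hFle : ∀ (m : ℕ) (x y : T), (⇑f)^[m] x ≤ (⇑f)^[m] y ↔ x ≤ y := by
    intro m
    induction m with
    | zero => simp
    | succ m ih =>
      intro x y
      rw [Function.iterate_succ_apply', Function.iterate_succ_apply', f.le_iff_le]
      exact ih x y
  have hFmono : ∀ (m : ℕ) {x y : T}, x ≤ y → (⇑f)^[m] x ≤ (⇑f)^[m] y :=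
    fun m _ _ h => (hFle m _ _).mpr h
  have hFinf : ∀ (m : ℕ) (x y : T), (⇑f)^[m] (x ⊓ y) = (⇑f)^[m] x ⊓ (⇑f)^[m] y := by
    intro m
    induction m with
    | zero => simp
    | succ m ih =>
      intro x y
      rw [Function.iterate_succ_apply', Function.iterate_succ_apply',
        Function.iterate_succ_apply', ih, f.map_inf]
  set c := η 0 ⊓ η u with hc
  have hc0 : c ≤ η 0 := inf_le_left
  have hfixq : ∀ q : ℕ, (⇑f)^[u * q] c = c := by
    intro q; induction q with
    | zero => simp
    | succ q ih =>
      have h : u * (q + 1) = u + u * q := by ring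
      rw [h, Function.iterate_add_apply, ih, hfix]
  have hFmod : ∀ m : ℕ, (⇑f)^[m] c = (⇑f)^[m % u] c := by
    intro m
    conv_lhs => rw [← Nat.mod_add_div m u]
    rw [Function.iterate_add_apply, hfixq]
  have hmodeq : ∀ a b : ℕ, a ≤ b → (b - a) % u = 0 → b % u = a % u := by
    intro a b hab h0
    obtain ⟨t, ht⟩ := Nat.dvd_of_mod_eq_zero h0
    have hb : b = a + u * t := by omega
    rw [hb, Nat.add_mul_mod_self_left]
  have hL3 : ∀ m : ℕ, 0 < m → m ≤ n → m % u ≠ 0 → η 0 ⊓ η m < c := by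
    intro m hm hmn hmod
    refine lt_of_le_of_ne (hmax m hm hmn) ?_
    intro heq
    have hcm : c ≤ η m := heq ▸ inf_le_right
    have h1 : η m = (⇑f)^[u * (m / u)] (η (m % u)) := by
      rw [← hηs]; congr 1; exact (Nat.div_add_mod m u).symm
    rw [h1, ← hfixq (m / u)] at hcm
    have h2 : c ≤ η (m % u) := (hFle _ _ _).mp hcm
    exact absurd ((le_inf hc0 h2).trans_lt
      (hmin _ (Nat.pos_of_ne_zero hmod) (Nat.mod_lt m hu))) (lt_irrefl c)
  have hL5 : ∀ a k : ℕ, a ≤ n → k ≤ n → k % u ≠ a % u → ¬ (⇑f)^[a] c ≤ η k := by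
    intro a k han hkn hne hle
    rcases le_or_gt a k with h | h
    · have hak : a ≠ k := fun e => hne (by rw [e])
      have hm : 0 < k - a := by omega
      have hkrw : η k = (⇑f)^[a] (η (k - a)) := by rw [← hηs]; congr 1; omega
      rw [hkrw] at hle
      have hck : c ≤ η (k - a) := (hFle _ _ _).mp hle
      have hmod : (k - a) % u ≠ 0 := fun h0 => hne (hmodeq a k h h0)
      exact absurd ((le_inf hc0 hck).trans_lt (hL3 _ hm (by omega) hmod)) (lt_irrefl c)
    · have hmpos : 0 < a - k := by omega
      have hr0 : (a - k) % u ≠ 0 := fun h0 => hne (hmodeq k a h.le h0).symm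
      have harw : (⇑f)^[a] c = (⇑f)^[k] ((⇑f)^[a - k] c) := by
        rw [← Function.iterate_add_apply]; congr 1; omega
      have hk0 : η k = (⇑f)^[k] (η 0) := by rw [← hηs, Nat.add_zero]
      rw [harw, hk0] at hle
      have h1 : (⇑f)^[(a - k) % u] c ≤ η 0 := by
        rw [← hFmod]; exact (hFle _ _ _).mp hle
      have h2 : (⇑f)^[(a - k) % u] c ≤ η ((a - k) % u) := by
        have h := hFmono ((a - k) % u) hc0
        rwa [← hηs ((a - k) % u) 0, Nat.add_zero] at h
      have h3 : (⇑f)^[(a - k) % u] c < c :=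
        (le_inf h1 h2).trans_lt (hmin _ (Nat.pos_of_ne_zero hr0) (Nat.mod_lt _ hu))
      set r := (a - k) % u with hrdef
      have h4 : ∀ t : ℕ, (⇑f)^[r * (t + 1)] c < c := by
        intro t; induction t with
        | zero => simpa using h3
        | succ t ih =>
          have hsplit : r * (t + 1 + 1) = r + r * (t + 1) := by ring
          rw [hsplit, Function.iterate_add_apply]
          exact lt_of_le_of_lt (hFmono r ih.le) h3
      have h5 := h4 (u - 1)
      rw [show r * (u - 1 + 1) = u * r by rw [Nat.sub_add_cancel hu]; ring, hfixq] at h5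
      exact absurd h5 (lt_irrefl c)
  have hge : ∀ a : ℕ, (⇑f)^[a % u] c ≤ η a := by
    intro a
    rw [← hFmod]
    have h := hFmono a hc0
    rwa [← hηs a 0, Nat.add_zero] at h
  have hmeet : ∀ a b : ℕ, a < b → b ≤ n → η a ⊓ η b ≤ (⇑f)^[a % u] c := by
    intro a b hab hbn
    have h1 : η b = (⇑f)^[a] (η (b - a)) := by rw [← hηs]; congr 1; omega
    have h2 : η a = (⇑f)^[a] (η 0) := by rw [← hηs, Nat.add_zero]
    rw [h1, h2, ← hFinf, ← hFmod]
    exact hFmono a (hmax (b - a) (by omega) (by omega))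
  intro i j k hi hj hk hij hki hkj
  by_cases hkr : k % u = i % u
  · have key : ∀ a : ℕ, a ≤ n → a % u = i % u → a ≠ k → η a ⊓ η k = (⇑f)^[i % u] c := by
      intro a han har hak
      refine le_antisymm ?_ (le_inf (har ▸ hge a) (hkr ▸ hge k))
      rcases lt_or_gt_of_ne hak with h | h
      · have hm := hmeet a k h hk; rwa [har] at hm
      · have hm := hmeet k a h han; rw [hkr] at hm; rw [inf_comm]; exact hm
    rw [key i hi rfl (Ne.symm hki), key j hj hij.symm (Ne.symm hkj)]
  · have key : ∀ a : ℕ, a ≤ n → a % u = i % u → η a ⊓ η k = (⇑f)^[i % u] c ⊓ η k := by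
      intro a han har
      have hd : (⇑f)^[i % u] c ≤ η a := har ▸ hge a
      rcases hsl (η a) (η a ⊓ η k) ((⇑f)^[i % u] c) inf_le_left hd with h | h
      · exact le_antisymm (le_inf h inf_le_right) (inf_le_inf_right _ hd)
      · exact absurd (by rw [hFmod a, har]; exact h.trans inf_le_right : (⇑f)^[a] c ≤ η k)
          (hL5 a k han hk (by rw [har]; exact hkr))
    rw [key i hi rfl, key j hj hij.symm]
end
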